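/- arXiv:2201.03475 — 10 statements merged into one kernel-verified Lean document; each statement's English description precedes it below -/
import Mathlib

section
/- The family {u_i ⊗ g_W^{n−i}(w_j) : 1 ≤ i ≤ m, 1 ≤ j ≤ n} is an F-basis of U ⊗_F W. Moreover, writing v_{i,j} = u_i ⊗ g_W^{n−i}(w_j) and interpreting v_{k,ℓ} = 0 when k < 1 or ℓ < 1, one has (g − id)(v_{i,j}) = v_{i−1,j} + v_{i,j−1} for all 1 ≤ i ≤ m and 1 ≤ j ≤ n. -/
/-!
Writing `v i j = u i ⊗ gW ^ (n - i) (w j)`, the family spans because every `gW ^ k` is onto, so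
`u i ⊗ W` lies in its span for each `i`; it has `m * n = dim (U ⊗ W)` members, hence is a basis.
For the recurrence, `(gU ⊗ gW - 1)(u ⊗ x) = (gU - 1) u ⊗ gW x + u ⊗ (gW - 1) x`, where
`gU - 1` and `gW - 1` shift the bases down by one, `gW` commutes with `gW ^ k`, and the extra
factor `gW` in the first term raises the exponent `n - i` to `n - (i - 1)`.
-/

open TensorProduct

theorem span_range_tmul_eq_top {R M N ι κ : Type*} [CommSemiring R] [AddCommMonoid M] [Module R M]
    [AddCommMonoid N] [Module R N] {u : ι → M} {w : ι → κ → N}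
    (hu : Submodule.span R (Set.range u) = ⊤) (hw : ∀ i, Submodule.span R (Set.range (w i)) = ⊤) :
    Submodule.span R (Set.range fun p : ι × κ => u p.1 ⊗ₜ[R] w p.1 p.2) = ⊤ := by
  set S := Submodule.span R (Set.range fun p : ι × κ => u p.1 ⊗ₜ[R] w p.1 p.2)
  have hleft : ∀ i y, u i ⊗ₜ[R] y ∈ S := by
    intro i y
    have : Submodule.span R (Set.range (w i)) ≤ S.comap (TensorProduct.mk R M N (u i)) :=
      Submodule.span_le.mpr (by rintro _ ⟨j, rfl⟩; exact Submodule.subset_span ⟨(i, j), rfl⟩)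
    exact this (hw i ▸ Submodule.mem_top)
  rw [eq_top_iff, ← span_tmul_eq_top, Submodule.span_le]
  rintro _ ⟨x, y, rfl⟩
  have : Submodule.span R (Set.range u) ≤ S.comap ((TensorProduct.mk R M N).flip y) :=
    Submodule.span_le.mpr (by rintro _ ⟨i, rfl⟩; exact hleft i y)
  exact this (hu ▸ Submodule.mem_top)

theorem Module.Basis.span_range_comp_eq_top {R M N ι : Type*} [Semiring R] [AddCommMonoid M]
    [Module R M] [AddCommMonoid N] [Module R N] (b : Module.Basis ι R M) {f : M →ₗ[R] N}
    (hf : Function.Surjective f) :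
    Submodule.span R (Set.range (f ∘ b)) = ⊤ := by
  rw [Set.range_comp, ← Submodule.map_span, b.span_eq, Submodule.map_top,
    LinearMap.range_eq_top.mpr hf]

theorem linearIndependent_tmul_and_span_eq_top {K V W ι κ : Type*} [Field K] [AddCommGroup V]
    [Module K V] [AddCommGroup W] [Module K W] [Fintype ι] [Fintype κ]
    (bV : Module.Basis ι K V) (bW : Module.Basis κ K W) (f : ι → W →ₗ[K] W)
    (hf : ∀ i, Function.Surjective (f i)) :
    LinearIndependent K (fun p : ι × κ => bV p.1 ⊗ₜ[K] f p.1 (bW p.2)) ∧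
      Submodule.span K (Set.range fun p : ι × κ => bV p.1 ⊗ₜ[K] f p.1 (bW p.2)) = ⊤ := by
  have hspan := span_range_tmul_eq_top (w := fun i => f i ∘ bW) bV.span_eq
    fun i => bW.span_range_comp_eq_top (hf i)
  refine ⟨linearIndependent_of_top_le_span_of_card_eq_finrank hspan.ge ?_, hspan⟩
  rw [Module.finrank_tensorProduct, Module.finrank_eq_card_basis bV,
    Module.finrank_eq_card_basis bW, Fintype.card_prod]

theorem map_sub_id_tmul {R M N : Type*} [CommRing R] [AddCommGroup M] [Module R M]
    [AddCommGroup N] [Module R N] (f : M →ₗ[R] M) (g : N →ₗ[R] N) (x : M) (y : N) :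
    (TensorProduct.map f g - LinearMap.id : M ⊗[R] N →ₗ[R] M ⊗[R] N) (x ⊗ₜ y) =
      (f x - x) ⊗ₜ g y + x ⊗ₜ (g y - y) := by
  rw [LinearMap.sub_apply, map_tmul, LinearMap.id_apply, sub_tmul, tmul_sub]
  abel

/-- The paper's 1-based vector `b_i` for `1 ≤ i ≤ n`, and `0` at every other integer `i`. -/
def zeroExtend {M : Type*} [Zero M] {n : ℕ} (b : Fin n → M) (i : ℤ) : M :=
  if h : 1 ≤ i ∧ i ≤ n then b ⟨(i - 1).toNat, by omega⟩ else 0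

section zeroExtend

variable {M : Type*} {n : ℕ}

theorem zeroExtend_of_le [Zero M] (b : Fin n → M) {i : ℤ} (h1 : 1 ≤ i) (h2 : i ≤ n) :
    zeroExtend b i = b ⟨(i - 1).toNat, by omega⟩ :=
  dif_pos ⟨h1, h2⟩

theorem zeroExtend_of_not_le [Zero M] (b : Fin n → M) {i : ℤ} (h : ¬(1 ≤ i ∧ i ≤ n)) :
    zeroExtend b i = 0 :=
  dif_neg h

theorem zeroExtend_natCast_succ [Zero M] (b : Fin n → M) (k : Fin n) :
    zeroExtend b (((k : ℕ) + 1 : ℕ) : ℤ) = b k := by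
  rw [zeroExtend_of_le b (by omega) (by omega)]
  congr
  omega

theorem apply_zeroExtend_sub_zeroExtend {R : Type*} [Ring R] [AddCommGroup M] [Module R M]
    (b : Fin n → M) (f : M →ₗ[R] M)
    (hf0 : ∀ i : Fin n, (i : ℕ) = 0 → f (b i) = b i)
    (hf1 : ∀ i : Fin n, 1 ≤ (i : ℕ) →
      f (b i) = b ⟨(i : ℕ) - 1, lt_of_le_of_lt (Nat.sub_le _ 1) i.isLt⟩ + b i)
    {i : ℤ} (hi : i ≤ n) :
    f (zeroExtend b i) - zeroExtend b i = zeroExtend b (i - 1) := by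
  rcases lt_trichotomy i 1 with hlt | rfl | hgt
  · rw [zeroExtend_of_not_le b (by omega), zeroExtend_of_not_le b (by omega), map_zero, sub_zero]
  · rw [zeroExtend_of_le b le_rfl hi, hf0 _ rfl, sub_self, zeroExtend_of_not_le b (by omega)]
  · rw [zeroExtend_of_le b hgt.le hi, hf1 _ (by dsimp only; omega), add_sub_cancel_right,
      zeroExtend_of_le b (by omega) (by omega)]
    congr 2
    dsimp only
    omega

end zeroExtend

/-- The family {u_i ⊗ g_W^{n−i}(w_j)} is an F-basis of U ⊗ W, and with
v_{i,j} = u_i ⊗ g_W^{n−i}(w_j) (zero out of range), (g − id)(v_{i,j}) = v_{i−1,j} + v_{i,j−1}. -/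
theorem stmt_3 (F : Type*) [Field F] (m n : ℕ) (hmn : m ≤ n)
    (U W : Type*) [AddCommGroup U] [Module F U] [AddCommGroup W] [Module F W]
    (bU : Module.Basis (Fin m) F U) (bW : Module.Basis (Fin n) F W)
    (gU : U →ₗ[F] U) (gW : W →ₗ[F] W)
    (hgU0 : ∀ i : Fin m, (i : ℕ) = 0 → gU (bU i) = bU i)
    (hgU1 : ∀ i : Fin m, 1 ≤ (i : ℕ) →
      gU (bU i) = bU ⟨(i : ℕ) - 1, lt_of_le_of_lt (Nat.sub_le _ 1) i.isLt⟩ + bU i)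
    (hgW0 : ∀ j : Fin n, (j : ℕ) = 0 → gW (bW j) = bW j)
    (hgW1 : ∀ j : Fin n, 1 ≤ (j : ℕ) →
      gW (bW j) = bW ⟨(j : ℕ) - 1, lt_of_le_of_lt (Nat.sub_le _ 1) j.isLt⟩ + bW j)
    (hgW_bij : Function.Bijective gW)
    (g : U ⊗[F] W →ₗ[F] U ⊗[F] W) (hg : g = TensorProduct.map gU gW)
    (vv : ℤ → ℤ → U ⊗[F] W)
    (hvv : ∀ (i j : ℤ) (h1 : 1 ≤ i) (h2 : i ≤ (m : ℤ)) (h3 : 1 ≤ j) (h4 : j ≤ (n : ℤ)),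
      vv i j = bU ⟨(i - 1).toNat, by omega⟩ ⊗ₜ[F]
        ((gW ^ ((n : ℤ) - i).toNat) (bW ⟨(j - 1).toNat, by omega⟩)))
    (hvv0 : ∀ i j : ℤ, (i < 1 ∨ (m : ℤ) < i ∨ j < 1 ∨ (n : ℤ) < j) → vv i j = 0) :
    (LinearIndependent F
        (fun p : Fin m × Fin n => vv (((p.1 : ℕ) + 1 : ℕ) : ℤ) (((p.2 : ℕ) + 1 : ℕ) : ℤ)) ∧
      Submodule.span F
        (Set.range (fun p : Fin m × Fin n =>
          vv (((p.1 : ℕ) + 1 : ℕ) : ℤ) (((p.2 : ℕ) + 1 : ℕ) : ℤ))) = ⊤) ∧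
      (∀ i j : ℤ, 1 ≤ i → i ≤ (m : ℤ) → 1 ≤ j → j ≤ (n : ℤ) →
        (g - (LinearMap.id : U ⊗[F] W →ₗ[F] U ⊗[F] W)) (vv i j) = vv (i - 1) j + vv i (j - 1)) := by
  subst hg
  have hv : ∀ i j,
      vv i j = zeroExtend bU i ⊗ₜ[F] (gW ^ ((n : ℤ) - i).toNat) (zeroExtend bW j) := by
    intro i j
    by_cases hin : 1 ≤ i ∧ i ≤ m ∧ 1 ≤ j ∧ j ≤ n
    · obtain ⟨hi1, him, hj1, hjn⟩ := hin
      rw [hvv i j hi1 him hj1 hjn, zeroExtend_of_le bU hi1 him, zeroExtend_of_le bW hj1 hjn]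
    · rw [hvv0 i j (by omega)]
      by_cases hi : 1 ≤ i ∧ i ≤ m
      · rw [zeroExtend_of_not_le bW (by omega), map_zero, tmul_zero]
      · rw [zeroExtend_of_not_le bU hi, zero_tmul]
  refine ⟨?_, fun i j hi1 him hj1 hjn => ?_⟩
  · simp only [hv, zeroExtend_natCast_succ]
    exact linearIndependent_tmul_and_span_eq_top bU bW
      (fun i => gW ^ ((n : ℤ) - (((i : ℕ) + 1 : ℕ) : ℤ)).toNat)
      fun _ => Module.End.iterate_surjective hgW_bij.surjective _
  · have hexp : ((n : ℤ) - (i - 1)).toNat = ((n : ℤ) - i).toNat + 1 := by omega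
    have hcomm : ∀ (k : ℕ) (x : W), gW ((gW ^ k) x) - (gW ^ k) x = (gW ^ k) (gW x - x) := by
      intro k x
      rw [map_sub, ← Module.End.mul_apply, ← pow_succ', pow_succ, Module.End.mul_apply]
    rw [hv, hv, hv, map_sub_id_tmul, apply_zeroExtend_sub_zeroExtend bU gU hgU0 hgU1 him, hcomm,
      apply_zeroExtend_sub_zeroExtend bW gW hgW0 hgW1 hjn, hexp, pow_succ', Module.End.mul_apply]
end

section
/- The set {x_1, x_2, …, x_m} is linearly independent over F, and N(x_i) = 0 for every i ∈ {1,…,m}. -/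
/-!
`x_i` is the alternating sum along the `i`-th antidiagonal. Its only entry in the first row is
`v_{1,i}`, with coefficient one, and all its other entries lie in rows `≥ 2`; comparing with the
first row therefore makes the `x_i` independent. Applying `N` to the `j`-th summand produces the
two neighbours `v_{j-1,i+1-j} + v_{j,i-j}`, which are shared with the adjacent summands of opposite
sign, so `N x_i` telescopes to boundary terms that vanish.
-/

open Submodule Function

theorem LinearIndependent.of_sub_mem_span_image {ι κ R M : Type*} [Ring R] [AddCommGroup M]
    [Module R M] {b : ι → M} (hb : LinearIndependent R b) {σ : κ → ι} (hσ : Injective σ)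
    {s : Set ι} (hs : Disjoint (Set.range σ) s) {y : κ → M}
    (hy : ∀ k, y k - b (σ k) ∈ span R (b '' s)) : LinearIndependent R y := by
  set π := (span R (b '' s)).mkQ
  have hπ : π ∘ y = π ∘ b ∘ σ := funext fun k => (Submodule.Quotient.eq _).2 (hy k)
  refine LinearIndependent.of_comp π ?_
  rw [hπ]
  refine (hb.comp σ hσ).map ?_
  rw [ker_mkQ, Set.range_comp]
  exact hb.disjoint_span_image hs

theorem Int.sum_Icc_sub {M : Type*} [AddCommGroup M] (u : ℤ → M) {a b : ℤ} (hab : a ≤ b) :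
    ∑ j ∈ Finset.Icc (a + 1) b, (u (j - 1) - u j) = u a - u b := by
  induction b, hab using Int.leInduction with
  | base => simp
  | succ b hab ih =>
    rw [← Finset.sum_Ico_add_eq_sum_Icc (by omega), Finset.Ico_add_one_right_eq_Icc, ih,
      add_sub_cancel_right, sub_add_sub_cancel]

theorem neg_one_pow_toNat_sub_one {R : Type*} [Monoid R] [HasDistribNeg R] {j : ℤ}
    (hj : 1 ≤ j) :
    (-1 : R) ^ (j - 1).toNat = -(-1) ^ j.toNat := by
  rw [show j.toNat = (j - 1).toNat + 1 by omega, pow_succ, mul_neg_one, neg_neg]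

section Grid

variable (F : Type*) {V : Type*} [Ring F] [AddCommGroup V] [Module F V]

def gridFamily (m n : ℕ) (v : ℤ → ℤ → V) (p : Fin m × Fin n) : V :=
  v (((p.1 : ℕ) + 1 : ℕ) : ℤ) (((p.2 : ℕ) + 1 : ℕ) : ℤ)

noncomputable def altAntidiagonal (v : ℤ → ℤ → V) (i : ℤ) : V :=
  ∑ j ∈ Finset.Icc (1 : ℤ) i, ((-1 : F) ^ (j - 1).toNat) • v j (i + 1 - j)

variable {F} {m n : ℕ} {v : ℤ → ℤ → V}

theorem mem_span_gridFamily_of_two_le {k l : ℤ} (hk : 2 ≤ k) (hkm : k ≤ m) (hl : 1 ≤ l)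
    (hln : l ≤ n) : v k l ∈ span F (gridFamily m n v '' {p | (p.1 : ℕ) ≠ 0}) := by
  refine subset_span ⟨(⟨(k - 1).toNat, by omega⟩, ⟨(l - 1).toNat, by omega⟩),
    show (k - 1).toNat ≠ 0 by omega, ?_⟩
  simp only [gridFamily]
  congr <;> omega

theorem altAntidiagonal_sub_mem_span {i : ℤ} (hi : 1 ≤ i) (him : i ≤ m) (hin : i ≤ n) :
    altAntidiagonal F v i - v 1 i ∈ span F (gridFamily m n v '' {p | (p.1 : ℕ) ≠ 0}) := by
  rw [altAntidiagonal, ← Finset.add_sum_Ioc_eq_sum_Icc hi]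
  simp only [sub_self, Int.toNat_zero, pow_zero, one_smul, add_sub_cancel_right,
    add_sub_cancel_left]
  refine sum_mem fun j hj => smul_mem _ _ ?_
  rw [Finset.mem_Ioc] at hj
  exact mem_span_gridFamily_of_two_le (by omega) (by omega) (by omega) (by omega)

theorem linearIndependent_altAntidiagonal (hmn : m ≤ n)
    (hv : LinearIndependent F (gridFamily m n v)) :
    LinearIndependent F (fun i : Fin m => altAntidiagonal F v (((i : ℕ) + 1 : ℕ) : ℤ)) := by
  refine hv.of_sub_mem_span_image (s := {p | (p.1 : ℕ) ≠ 0})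
    (σ := fun i : Fin m => (⟨0, i.pos⟩, ⟨i, by omega⟩))
    (fun i j h => by simpa [Fin.ext_iff] using h) ?_ fun i => ?_
  · rw [Set.disjoint_left]
    rintro _ ⟨i, rfl⟩
    simp
  · simpa [gridFamily] using
      altAntidiagonal_sub_mem_span (F := F) (v := v) (i := (((i : ℕ) + 1 : ℕ) : ℤ))
        (by omega) (by omega) (by omega)

theorem map_altAntidiagonal_eq_zero (N : V →ₗ[F] V)
    (hN : ∀ i j : ℤ, 1 ≤ i → i ≤ (m : ℤ) → 1 ≤ j → j ≤ (n : ℤ) →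
      N (v i j) = v (i - 1) j + v i (j - 1))
    (hrow : ∀ l, v 0 l = 0) (hcol : ∀ k, v k 0 = 0)
    {i : ℤ} (hi : 1 ≤ i) (him : i ≤ m) (hin : i ≤ n) : N (altAntidiagonal F v i) = 0 := by
  set u : ℤ → V := fun j => ((-1 : F) ^ j.toNat) • v j (i - j)
  have hterm : ∀ j ∈ Finset.Icc (1 : ℤ) i,
      N (((-1 : F) ^ (j - 1).toNat) • v j (i + 1 - j)) = u (j - 1) - u j := by
    intro j hj
    rw [Finset.mem_Icc] at hj
    rw [map_smul, hN j _ (by omega) (by omega) (by omega) (by omega)]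
    simp only [u]
    rw [neg_one_pow_toNat_sub_one (by omega), show i + 1 - j = i - (j - 1) by ring,
      show i - (j - 1) - 1 = i - j by ring, smul_add, neg_smul, neg_smul]
    exact (sub_eq_add_neg _ _).symm
  rw [altAntidiagonal, map_sum, Finset.sum_congr rfl hterm]
  exact (Int.sum_Icc_sub u (a := 0) (by omega)).trans (by simp [u, hrow, hcol])

end Grid

theorem stmt_5_general (F : Type*) [Field F] (m n : ℕ) (hmn : m ≤ n)
    (V : Type*) [AddCommGroup V] [Module F V]
    (v : ℤ → ℤ → V)
    (hv_indep : LinearIndependent F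
      (fun p : Fin m × Fin n => v (((p.1 : ℕ) + 1 : ℕ) : ℤ) (((p.2 : ℕ) + 1 : ℕ) : ℤ)))
    (hv0 : ∀ i j : ℤ, (i < 1 ∨ (m : ℤ) < i ∨ j < 1 ∨ (n : ℤ) < j) → v i j = 0)
    (N : V →ₗ[F] V)
    (hN : ∀ i j : ℤ, 1 ≤ i → i ≤ (m : ℤ) → 1 ≤ j → j ≤ (n : ℤ) →
      N (v i j) = v (i - 1) j + v i (j - 1))
    (x : ℤ → V)
    (hx : ∀ i : ℤ, x i =
      ∑ j ∈ Finset.Icc (1 : ℤ) i, ((-1 : F) ^ (j - 1).toNat) • v j (i + 1 - j)) :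
    LinearIndependent F (fun i : Fin m => x (((i : ℕ) + 1 : ℕ) : ℤ)) ∧
      ∀ i : ℤ, 1 ≤ i → i ≤ (m : ℤ) → N (x i) = 0 := by
  obtain rfl : x = altAntidiagonal F v := funext hx
  refine ⟨linearIndependent_altAntidiagonal hmn hv_indep, fun i hi him => ?_⟩
  exact map_altAntidiagonal_eq_zero N hN (fun l => hv0 0 l (by omega))
    (fun k => hv0 k 0 (by omega)) hi him (by omega)

/-- The set `{x_1, …, x_m}` is linearly independent over `F`, and
`N(x_i) = 0` for every `i ∈ {1,…,m}`. -/
theorem stmt_5 (F : Type*) [Field F] (m n : ℕ) (hm : 0 < m) (hmn : m ≤ n)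
    (V : Type*) [AddCommGroup V] [Module F V]
    (v : ℤ → ℤ → V)
    (hv_indep : LinearIndependent F
      (fun p : Fin m × Fin n => v (((p.1 : ℕ) + 1 : ℕ) : ℤ) (((p.2 : ℕ) + 1 : ℕ) : ℤ)))
    (hv_span : Submodule.span F
      (Set.range (fun p : Fin m × Fin n =>
        v (((p.1 : ℕ) + 1 : ℕ) : ℤ) (((p.2 : ℕ) + 1 : ℕ) : ℤ))) = ⊤)
    (hv0 : ∀ i j : ℤ, (i < 1 ∨ (m : ℤ) < i ∨ j < 1 ∨ (n : ℤ) < j) → v i j = 0)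
    (N : V →ₗ[F] V)
    (hN : ∀ i j : ℤ, 1 ≤ i → i ≤ (m : ℤ) → 1 ≤ j → j ≤ (n : ℤ) →
      N (v i j) = v (i - 1) j + v i (j - 1))
    (x : ℤ → V)
    (hx : ∀ i : ℤ, x i =
      ∑ j ∈ Finset.Icc (1 : ℤ) i, ((-1 : F) ^ (j - 1).toNat) • v j (i + 1 - j)) :
    LinearIndependent F (fun i : Fin m => x (((i : ℕ) + 1 : ℕ) : ℤ)) ∧
      ∀ i : ℤ, 1 ≤ i → i ≤ (m : ℤ) → N (x i) = 0 :=
  stmt_5_general F m n hmn V v hv_indep hv0 N hN x hx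
end

section
/- For 2 ≤ k ≤ m+n−1, N maps D_k into D_{k−1}; let T_k : D_k → D_{k−1} denote this restriction. Then T_k is injective when n+1 ≤ k ≤ m+n−1, T_k is bijective when m+1 ≤ k ≤ n, and T_k is surjective with kernel equal to span{x_k} when 2 ≤ k ≤ m. -/
/-!
Write an element of `D k` as `∑ i, c i • v i (k + 1 - i)`, with `c` vanishing off the box.
Then `N` acts on coefficients by `c ↦ (a ↦ c a + c (a + 1))`, so by linear independence
`N z = 0` exactly when `c a + c (a + 1) = 0` for every cell `(a, k - a)` of the box. For
`k > m` this recursion runs down from `c (m + 1) = 0` and kills `c`; for `k ≤ m` it forces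
`c a = (-1) ^ (a - 1) * c 1`, i.e. `z ∈ F ∙ x k`. Surjectivity for `k ≤ n` is an induction on
the row: `v a (k - a) = N (v a (k + 1 - a)) - v (a - 1) (k + 1 - a)`, starting from `v 0 k = 0`.
-/

open Finset Submodule

abbrev InBox (m n i j : ℤ) : Prop := 1 ≤ i ∧ i ≤ m ∧ 1 ≤ j ∧ j ≤ n

section Propagation

variable {M : Type*} [AddMonoid M] {f : ℤ → M} {a b : ℤ}

theorem forall_eq_zero_of_add_succ_eq_zero_left (ha : f a = 0)
    (h : ∀ i, a ≤ i → i < b → f i + f (i + 1) = 0) : ∀ i, a ≤ i → i ≤ b → f i = 0 := by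
  intro i hai
  induction i, hai using Int.leInduction with
  | base => exact fun _ => ha
  | succ i hai ih =>
    intro hib
    simpa [ih (by omega)] using h i hai (by omega)

theorem forall_eq_zero_of_add_succ_eq_zero_right (hb : f b = 0)
    (h : ∀ i, a ≤ i → i < b → f i + f (i + 1) = 0) : ∀ i, a ≤ i → i ≤ b → f i = 0 := by
  intro i hai hib
  induction i, hib using Int.leInductionDown with
  | base => exact hb
  | pred i hib ih =>
    have := h (i - 1) hai (by omega)
    rwa [sub_add_cancel, ih (by omega), add_zero] at this

end Propagation

section Antidiagonal

variable {F V : Type*} [Field F] [AddCommGroup V] [Module F V] {v : ℤ → ℤ → V}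

theorem linearIndepOn_inBox {m n : ℕ} (hv : LinearIndependent F
      (fun p : Fin m × Fin n => v (((p.1 : ℕ) + 1 : ℕ) : ℤ) (((p.2 : ℕ) + 1 : ℕ) : ℤ))) :
    LinearIndepOn F (fun p : ℤ × ℤ => v p.1 p.2) {p | InBox m n p.1 p.2} := by
  let e : Fin m × Fin n → ℤ × ℤ := fun p => (((p.1 : ℕ) + 1 : ℕ), ((p.2 : ℕ) + 1 : ℕ))
  have he : Function.Injective e := by
    rintro ⟨a, b⟩ ⟨a', b'⟩ h
    simp only [e, Prod.mk.injEq, Nat.cast_inj, Nat.add_right_cancel_iff, Fin.val_inj] at h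
    rw [h.1, h.2]
  have hrange : Set.range e = {p | InBox m n p.1 p.2} := by
    ext ⟨i, j⟩
    constructor
    · rintro ⟨⟨a, b⟩, h⟩
      simp only [e, Prod.mk.injEq] at h
      show InBox _ _ _ _
      omega
    · rintro ⟨hi, him, hj, hjn⟩
      refine ⟨(⟨(i - 1).toNat, by omega⟩, ⟨(j - 1).toNat, by omega⟩), ?_⟩
      simp only [e, Prod.mk.injEq]
      omega
  rw [← hrange]
  exact (linearIndepOn_range_iff he _).2 hv

variable {m n k : ℤ}

def diagCells (v : ℤ → ℤ → V) (m n k : ℤ) : Set V :=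
  {z | ∃ i j : ℤ, 1 ≤ i ∧ i ≤ m ∧ 1 ≤ j ∧ j ≤ n ∧ i + j = k + 1 ∧ z = v i j}

noncomputable def diagSum (v : ℤ → ℤ → V) (m k : ℤ) (c : ℤ → F) : V :=
  ∑ i ∈ Icc 1 m, c i • v i (k + 1 - i)

theorem diagSum_add (c c' : ℤ → F) :
    diagSum v m k (c + c') = diagSum v m k c + diagSum v m k c' := by
  simp only [diagSum, Pi.add_apply, add_smul, sum_add_distrib]

theorem diagSum_smul (a : F) (c : ℤ → F) : diagSum v m k (a • c) = a • diagSum v m k c := by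
  simp only [diagSum, Pi.smul_apply, smul_eq_mul, mul_smul, smul_sum]

theorem diagSum_eq_zero (hv0 : ∀ i j, ¬InBox m n i j → v i j = 0) {c : ℤ → F}
    (hc : ∀ i, InBox m n i (k + 1 - i) → c i = 0) : diagSum v m k c = 0 := by
  refine sum_eq_zero fun i _ => ?_
  by_cases hi : InBox m n i (k + 1 - i)
  · rw [hc i hi, zero_smul]
  · rw [hv0 _ _ hi, smul_zero]

theorem diagSum_congr (hv0 : ∀ i j, ¬InBox m n i j → v i j = 0) {c c' : ℤ → F}
    (h : ∀ i, InBox m n i (k + 1 - i) → c i = c' i) : diagSum v m k c = diagSum v m k c' := by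
  refine sum_congr rfl fun i _ => ?_
  by_cases hi : InBox m n i (k + 1 - i)
  · rw [h i hi]
  · rw [hv0 _ _ hi, smul_zero, smul_zero]

theorem diagSum_mem_span (hv0 : ∀ i j, ¬InBox m n i j → v i j = 0) (c : ℤ → F) :
    diagSum v m k c ∈ span F (diagCells v m n k) := by
  refine sum_mem fun i _ => smul_mem _ _ ?_
  by_cases hi : InBox m n i (k + 1 - i)
  · exact subset_span ⟨i, k + 1 - i, hi.1, hi.2.1, hi.2.2.1, hi.2.2.2, by ring, rfl⟩
  · rw [hv0 _ _ hi]
    exact zero_mem _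

theorem exists_diagSum_eq_of_mem_span {z : V} (hz : z ∈ span F (diagCells v m n k)) :
    ∃ c : ℤ → F, (∀ i, ¬InBox m n i (k + 1 - i) → c i = 0) ∧ z = diagSum v m k c := by
  classical
  induction hz using span_induction with
  | mem w hw =>
    obtain ⟨i, j, hi1, him, hj1, hjn, hij, rfl⟩ := hw
    refine ⟨Pi.single i 1, fun i' hi' => Pi.single_eq_of_ne (by omega) _, ?_⟩
    have hj : j = k + 1 - i := by omega
    simp [diagSum, Pi.single_apply, hi1, him, hj]
  | zero => exact ⟨0, fun _ _ => rfl, by simp [diagSum]⟩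
  | add x y _ _ hx hy =>
    obtain ⟨c, hc, rfl⟩ := hx
    obtain ⟨c', hc', rfl⟩ := hy
    exact ⟨c + c', fun i hi => by simp [hc i hi, hc' i hi], (diagSum_add c c').symm⟩
  | smul a x _ hx =>
    obtain ⟨c, hc, rfl⟩ := hx
    exact ⟨a • c, fun i hi => by simp [hc i hi], (diagSum_smul a c).symm⟩

theorem eq_zero_of_diagSum_eq_zero (hv0 : ∀ i j, ¬InBox m n i j → v i j = 0)
    (hli : LinearIndepOn F (fun p : ℤ × ℤ => v p.1 p.2) {p | InBox m n p.1 p.2})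
    {c : ℤ → F} (h : diagSum v m k c = 0) : ∀ i, InBox m n i (k + 1 - i) → c i = 0 := by
  classical
  set s := (Icc 1 m).filter fun i => InBox m n i (k + 1 - i)
  have hs : LinearIndepOn F (fun i => v i (k + 1 - i)) (s : Set ℤ) := by
    refine (hli.mono ?_).comp_of_image (f := fun i => (i, k + 1 - i)) ?_
    · rintro _ ⟨i, hi, rfl⟩
      exact (mem_filter.1 hi).2
    · intro i _ i' _ hii'
      exact congrArg Prod.fst hii'
  intro i hi
  refine linearIndepOn_finset_iff.1 hs c ?_ i (mem_filter.2 ⟨mem_Icc.2 ⟨hi.1, hi.2.1⟩, hi⟩)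
  rw [← h, diagSum, sum_filter_of_ne]
  intro i _ hne
  by_contra hout
  exact hne (by rw [hv0 _ _ hout, smul_zero])

def altCoeff (k i : ℤ) : F := if 1 ≤ i ∧ i ≤ k then (-1) ^ (i - 1).toNat else 0

theorem altCoeff_add_succ {a : ℤ} (ha : 1 ≤ a) (hak : a < k) :
    altCoeff k a + altCoeff k (a + 1) = (0 : F) := by
  rw [altCoeff, altCoeff, if_pos ⟨ha, hak.le⟩, if_pos ⟨by omega, hak⟩,
    show (a + 1 - 1).toNat = (a - 1).toNat + 1 by omega, pow_succ]
  ring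

theorem sum_alternating_eq_diagSum (hkm : k ≤ m) :
    ∑ j ∈ Icc 1 k, (-1 : F) ^ (j - 1).toNat • v j (k + 1 - j) =
      diagSum v m k (altCoeff (F := F) k) := by
  rw [diagSum, ← sum_subset (Icc_subset_Icc_right hkm) fun i _ hi => ?_]
  · refine sum_congr rfl fun j hj => ?_
    rw [altCoeff, if_pos (mem_Icc.1 hj)]
  · rw [altCoeff, if_neg (mem_Icc.not.1 hi), zero_smul]

section Map

variable (N : V →ₗ[F] V)

theorem map_diagSum (hv0 : ∀ i j, ¬InBox m n i j → v i j = 0)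
    (hN : ∀ i j, InBox m n i j → N (v i j) = v (i - 1) j + v i (j - 1))
    {c : ℤ → F} (hc : ∀ i, ¬InBox m n i (k + 1 - i) → c i = 0) :
    N (diagSum v m k c) = diagSum v m (k - 1) (fun a => c a + c (a + 1)) := by
  have hterm : ∀ i ∈ Icc 1 m,
      N (c i • v i (k + 1 - i)) = c i • v (i - 1) (k + 1 - i) + c i • v i (k - i) := by
    intro i _
    by_cases hi : InBox m n i (k + 1 - i)
    · rw [map_smul, hN _ _ hi, smul_add, sub_right_comm, add_sub_cancel_right]
    · rw [hc i hi, zero_smul, map_zero, zero_smul, zero_smul, add_zero]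
  -- after the shift `a = i - 1` the only terms outside `Icc 1 m` are `a = 0`, where `v`
  -- vanishes, and `a = m`, where `c (m + 1)` vanishes
  have hshift : ∑ i ∈ Icc 1 m, c i • v (i - 1) (k + 1 - i)
      = ∑ a ∈ Icc 1 m, c (a + 1) • v a (k - a) := by
    calc _ = ∑ a ∈ Icc 0 (m - 1), c (a + 1) • v a (k - a) := by
          refine sum_nbij' (· - 1) (· + 1) (fun i hi => ?_) (fun a ha => ?_) (fun _ _ => by simp)
            (fun _ _ => by simp) (fun i _ => ?_)
          · simp only [mem_Icc] at hi ⊢; omega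
          · simp only [mem_Icc] at ha ⊢; omega
          · simp only [sub_add_cancel]; ring_nf
      _ = ∑ a ∈ Icc 0 m, c (a + 1) • v a (k - a) := by
          refine sum_subset (Icc_subset_Icc_right (by omega)) fun a ha hna => ?_
          simp only [mem_Icc] at ha hna
          rw [hc (a + 1) (by omega), zero_smul]
      _ = ∑ a ∈ Icc 1 m, c (a + 1) • v a (k - a) := by
          refine (sum_subset (Icc_subset_Icc_left (by omega)) fun a ha hna => ?_).symm
          simp only [mem_Icc] at ha hna
          rw [hv0 a _ (by omega), smul_zero]
  rw [diagSum, map_sum, sum_congr rfl hterm, sum_add_distrib, hshift, ← sum_add_distrib]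
  refine sum_congr rfl fun a _ => ?_
  rw [sub_add_cancel, add_smul, add_comm]

theorem map_diagSum_eq_zero_iff (hv0 : ∀ i j, ¬InBox m n i j → v i j = 0)
    (hN : ∀ i j, InBox m n i j → N (v i j) = v (i - 1) j + v i (j - 1))
    (hli : LinearIndepOn F (fun p : ℤ × ℤ => v p.1 p.2) {p | InBox m n p.1 p.2})
    {c : ℤ → F} (hc : ∀ i, ¬InBox m n i (k + 1 - i) → c i = 0) :
    N (diagSum v m k c) = 0 ↔ ∀ a, InBox m n a (k - a) → c a + c (a + 1) = 0 := by
  rw [map_diagSum N hv0 hN hc]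
  constructor
  · intro h a ha
    exact eq_zero_of_diagSum_eq_zero hv0 hli h a (by rwa [sub_add_cancel])
  · intro h
    exact diagSum_eq_zero hv0 fun a ha => h a (by rwa [sub_add_cancel] at ha)

theorem map_mem_span_diagCells (hv0 : ∀ i j, ¬InBox m n i j → v i j = 0)
    (hN : ∀ i j, InBox m n i j → N (v i j) = v (i - 1) j + v i (j - 1))
    {z : V} (hz : z ∈ span F (diagCells v m n k)) : N z ∈ span F (diagCells v m n (k - 1)) := by
  obtain ⟨c, hc, rfl⟩ := exists_diagSum_eq_of_mem_span hz
  rw [map_diagSum N hv0 hN hc]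
  exact diagSum_mem_span hv0 _

theorem eq_zero_of_map_eq_zero_of_lt (hv0 : ∀ i j, ¬InBox m n i j → v i j = 0)
    (hN : ∀ i j, InBox m n i j → N (v i j) = v (i - 1) j + v i (j - 1))
    (hli : LinearIndepOn F (fun p : ℤ × ℤ => v p.1 p.2) {p | InBox m n p.1 p.2})
    (hmk : m < k) {z : V} (hz : z ∈ span F (diagCells v m n k)) (h : N z = 0) : z = 0 := by
  obtain ⟨c, hc, rfl⟩ := exists_diagSum_eq_of_mem_span hz
  have hrel := (map_diagSum_eq_zero_iff N hv0 hN hli hc).1 h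
  have hzero := forall_eq_zero_of_add_succ_eq_zero_right (a := max 1 (k - n)) (b := m + 1)
    (hc (m + 1) (by omega)) fun a ha hab => hrel a (by omega)
  exact diagSum_eq_zero hv0 fun i hi => hzero i (by omega) (by omega)

theorem span_diagCells_le_map (hv0 : ∀ i j, ¬InBox m n i j → v i j = 0)
    (hN : ∀ i j, InBox m n i j → N (v i j) = v (i - 1) j + v i (j - 1)) (hkn : k ≤ n) :
    span F (diagCells v m n (k - 1)) ≤ (span F (diagCells v m n k)).map N := by
  rw [span_le]
  rintro _ ⟨a, j, ha, -, -, -, haj, rfl⟩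
  obtain rfl : j = k - a := by omega
  suffices ∀ a, 0 ≤ a → v a (k - a) ∈ (span F (diagCells v m n k)).map N from this a (by omega)
  intro a ha
  induction a, ha using Int.leInduction with
  | base => rw [hv0 0 _ (by omega)]; exact zero_mem _
  | succ a ha ih =>
    by_cases hbox : InBox m n (a + 1) (k - a)
    · have hcell : v (a + 1) (k - (a + 1)) = N (v (a + 1) (k - a)) - v a (k - a) := by
        rw [hN _ _ hbox, add_sub_cancel_right, add_sub_cancel_left, sub_add_eq_sub_sub]
      rw [hcell]
      refine sub_mem (mem_map_of_mem (subset_span ⟨a + 1, k - a, ?_⟩)) ih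
      exact ⟨hbox.1, hbox.2.1, hbox.2.2.1, hbox.2.2.2, by ring, rfl⟩
    · rw [hv0 _ _ (by omega)]
      exact zero_mem _

theorem map_eq_zero_iff_of_le (hv0 : ∀ i j, ¬InBox m n i j → v i j = 0)
    (hN : ∀ i j, InBox m n i j → N (v i j) = v (i - 1) j + v i (j - 1))
    (hli : LinearIndepOn F (fun p : ℤ × ℤ => v p.1 p.2) {p | InBox m n p.1 p.2})
    (hk : 1 ≤ k) (hkm : k ≤ m) (hmn : m ≤ n) {z : V} (hz : z ∈ span F (diagCells v m n k)) :
    N z = 0 ↔ ∃ c : F, z = c • diagSum v m k (altCoeff (F := F) k) := by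
  have halt : ∀ i, ¬InBox m n i (k + 1 - i) → altCoeff k i = (0 : F) :=
    fun i hi => if_neg (by omega)
  constructor
  · intro h
    obtain ⟨c, hc, rfl⟩ := exists_diagSum_eq_of_mem_span hz
    have hrel := (map_diagSum_eq_zero_iff N hv0 hN hli hc).1 h
    have hagree := forall_eq_zero_of_add_succ_eq_zero_left
      (f := fun i => c i - c 1 * altCoeff k i) (a := 1) (b := k)
      (by simp [altCoeff, hk]) fun a ha hak => by
        linear_combination hrel a (by omega) - c 1 * altCoeff_add_succ (F := F) ha hak
    refine ⟨c 1, ?_⟩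
    rw [← diagSum_smul]
    exact diagSum_congr hv0 fun i hi => sub_eq_zero.1 (hagree i hi.1 (by omega))
  · rintro ⟨c, rfl⟩
    rw [map_smul, (map_diagSum_eq_zero_iff N hv0 hN hli halt).2
      fun a ha => altCoeff_add_succ ha.1 (by omega), smul_zero]

end Map

end Antidiagonal

theorem stmt_6_general (F : Type*) [Field F] (m n : ℕ) (hmn : m ≤ n)
    (V : Type*) [AddCommGroup V] [Module F V]
    (v : ℤ → ℤ → V)
    (hv_indep : LinearIndependent F
      (fun p : Fin m × Fin n => v (((p.1 : ℕ) + 1 : ℕ) : ℤ) (((p.2 : ℕ) + 1 : ℕ) : ℤ)))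
    (hv0 : ∀ i j : ℤ, (i < 1 ∨ (m : ℤ) < i ∨ j < 1 ∨ (n : ℤ) < j) → v i j = 0)
    (N : V →ₗ[F] V)
    (hN : ∀ i j : ℤ, 1 ≤ i → i ≤ (m : ℤ) → 1 ≤ j → j ≤ (n : ℤ) →
      N (v i j) = v (i - 1) j + v i (j - 1))
    (D : ℤ → Submodule F V)
    (hD : ∀ k : ℤ, D k = Submodule.span F
      {z | ∃ i j : ℤ, 1 ≤ i ∧ i ≤ (m : ℤ) ∧ 1 ≤ j ∧ j ≤ (n : ℤ) ∧ i + j = k + 1 ∧ z = v i j})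
    (x : ℤ → V)
    (hx : ∀ i : ℤ, x i =
      ∑ j ∈ Finset.Icc (1 : ℤ) i, ((-1 : F) ^ (j - 1).toNat) • v j (i + 1 - j)) :
    ∀ k : ℤ, 2 ≤ k → k ≤ (m : ℤ) + n - 1 →
      (∀ z ∈ D k, N z ∈ D (k - 1)) ∧
      ((n : ℤ) + 1 ≤ k → ∀ z ∈ D k, N z = 0 → z = 0) ∧
      ((m : ℤ) + 1 ≤ k → k ≤ (n : ℤ) →
        (∀ z ∈ D k, N z = 0 → z = 0) ∧ (∀ u ∈ D (k - 1), ∃ z ∈ D k, N z = u)) ∧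
      (k ≤ (m : ℤ) →
        (∀ u ∈ D (k - 1), ∃ z ∈ D k, N z = u) ∧
        (∀ z ∈ D k, (N z = 0 ↔ ∃ c : F, z = c • x k))) := by
  have hv0' : ∀ i j, ¬InBox m n i j → v i j = 0 := fun i j h => hv0 i j (by omega)
  have hN' : ∀ i j, InBox m n i j → N (v i j) = v (i - 1) j + v i (j - 1) :=
    fun i j h => hN i j h.1 h.2.1 h.2.2.1 h.2.2.2
  have hli := linearIndepOn_inBox hv_indep
  have hD' : ∀ k, D k = span F (diagCells v m n k) := hD
  have hinj : ∀ k : ℤ, (m : ℤ) < k → ∀ z ∈ D k, N z = 0 → z = 0 := fun k hmk z hz =>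
    eq_zero_of_map_eq_zero_of_lt N hv0' hN' hli hmk (hD' k ▸ hz)
  have hsurj : ∀ k : ℤ, k ≤ n → ∀ u ∈ D (k - 1), ∃ z ∈ D k, N z = u := fun k hkn u hu =>
    hD' k ▸ span_diagCells_le_map N hv0' hN' hkn (hD' (k - 1) ▸ hu)
  intro k hk2 _
  refine ⟨fun z hz => ?_, fun hnk => hinj k (by omega), fun hmk hkn => ⟨hinj k (by omega),
    hsurj k hkn⟩, fun hkm => ⟨hsurj k (by omega), fun z hz => ?_⟩⟩
  · rw [hD'] at hz ⊢
    exact map_mem_span_diagCells N hv0' hN' hz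
  · rw [hx, sum_alternating_eq_diagSum hkm]
    exact map_eq_zero_iff_of_le N hv0' hN' hli (by omega) hkm (by omega) (hD' k ▸ hz)

/-- For 2 ≤ k ≤ m+n−1, N maps D_k into D_{k−1}; the restriction T_k is
injective when n+1 ≤ k ≤ m+n−1, bijective when m+1 ≤ k ≤ n, and surjective with kernel
span{x_k} when 2 ≤ k ≤ m. -/
theorem stmt_6 (F : Type*) [Field F] (m n : ℕ) (hm : 0 < m) (hmn : m ≤ n)
    (V : Type*) [AddCommGroup V] [Module F V]
    (v : ℤ → ℤ → V)
    (hv_indep : LinearIndependent F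
      (fun p : Fin m × Fin n => v (((p.1 : ℕ) + 1 : ℕ) : ℤ) (((p.2 : ℕ) + 1 : ℕ) : ℤ)))
    (hv_span : Submodule.span F
      (Set.range (fun p : Fin m × Fin n =>
        v (((p.1 : ℕ) + 1 : ℕ) : ℤ) (((p.2 : ℕ) + 1 : ℕ) : ℤ))) = ⊤)
    (hv0 : ∀ i j : ℤ, (i < 1 ∨ (m : ℤ) < i ∨ j < 1 ∨ (n : ℤ) < j) → v i j = 0)
    (N : V →ₗ[F] V)
    (hN : ∀ i j : ℤ, 1 ≤ i → i ≤ (m : ℤ) → 1 ≤ j → j ≤ (n : ℤ) →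
      N (v i j) = v (i - 1) j + v i (j - 1))
    (D : ℤ → Submodule F V)
    (hD : ∀ k : ℤ, D k = Submodule.span F
      {z | ∃ i j : ℤ, 1 ≤ i ∧ i ≤ (m : ℤ) ∧ 1 ≤ j ∧ j ≤ (n : ℤ) ∧ i + j = k + 1 ∧ z = v i j})
    (x : ℤ → V)
    (hx : ∀ i : ℤ, x i =
      ∑ j ∈ Finset.Icc (1 : ℤ) i, ((-1 : F) ^ (j - 1).toNat) • v j (i + 1 - j)) :
    ∀ k : ℤ, 2 ≤ k → k ≤ (m : ℤ) + n - 1 →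
      (∀ z ∈ D k, N z ∈ D (k - 1)) ∧
      ((n : ℤ) + 1 ≤ k → ∀ z ∈ D k, N z = 0 → z = 0) ∧
      ((m : ℤ) + 1 ≤ k → k ≤ (n : ℤ) →
        (∀ z ∈ D k, N z = 0 → z = 0) ∧ (∀ u ∈ D (k - 1), ∃ z ∈ D k, N z = u)) ∧
      (k ≤ (m : ℤ) →
        (∀ u ∈ D (k - 1), ∃ z ∈ D k, N z = u) ∧
        (∀ z ∈ D k, (N z = 0 ↔ ∃ c : F, z = c • x k))) :=
  stmt_6_general F m n hmn V v hv_indep hv0 N hN D hD x hx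
end

section
/- The kernel of N equals the span of {x_1, x_2, …, x_m}; in particular, the kernel of N has dimension m over F. -/
/-!
Read a vector through its coordinates `f (i, j)` on the grid `[1, m] × [1, n]`, extended by zero
to `ℤ × ℤ`. Dually to `N v_{i,j} = v_{i-1,j} + v_{i,j-1}`, the equation `N w = 0` says
`f (i + 1, j) + f (i, j + 1) = 0` on the grid: `f` alternates in sign along every antidiagonal.
Hence `f (i, j) = ± f (1, i + j - 1)`, and the zero row below the grid forces `f (1, s) = 0` for
`s > m`, so `f` is a combination of the `m` alternating antidiagonal patterns, which are the
coordinates of `x_1, …, x_m`. For `m ≤ n` each of these antidiagonals runs inside the grid from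
`(1, s)` to `(s, 1)`, so the signs cancel and `x_s` lies in the kernel; and `x_s` is the only one
with a nonzero `(1, s)` coordinate, which makes them independent.
-/

def gridBox (m n : ℕ) : Set (ℤ × ℤ) := Set.Icc 1 (m : ℤ) ×ˢ Set.Icc 1 (n : ℤ)

lemma mem_gridBox {m n : ℕ} {i j : ℤ} :
    (i, j) ∈ gridBox m n ↔ 1 ≤ i ∧ i ≤ m ∧ 1 ≤ j ∧ j ≤ n := by
  simp only [gridBox, Set.mem_prod, Set.mem_Icc, and_assoc]

instance (m n : ℕ) : DecidablePred (· ∈ gridBox m n) :=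
  fun q => decidable_of_iff (1 ≤ q.1 ∧ q.1 ≤ m ∧ 1 ≤ q.2 ∧ q.2 ≤ n) mem_gridBox.symm

section Antidiagonal

variable {R : Type*} [Ring R] {m n : ℕ}

def AlternatesOnAntidiagonals (m n : ℕ) (f : ℤ × ℤ → R) : Prop :=
  ∀ i j, (i, j) ∈ gridBox m n → f (i + 1, j) + f (i, j + 1) = 0

def signedAntidiagonal (m n : ℕ) (s : ℤ) (q : ℤ × ℤ) : R :=
  if q ∈ gridBox m n ∧ q.1 + q.2 = s + 1 then (-1) ^ (q.1 - 1).toNat else 0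

namespace AlternatesOnAntidiagonals

variable {f : ℤ × ℤ → R} (hf : ∀ q ∉ gridBox m n, f q = 0) (hrec : AlternatesOnAntidiagonals m n f)
include hf hrec

lemma apply_eq_apply_one_mul {i : ℤ} (hi : 1 ≤ i) (him : i ≤ m) :
    ∀ j, 1 ≤ j → f (i, j) = f (1, i + j - 1) * (-1) ^ (i - 1).toNat := by
  induction i, hi using Int.leInduction with
  | base => intro j _; simp
  | succ i hi ih =>
    intro j hj
    rw [show i + 1 + j - 1 = i + (j + 1) - 1 by ring,
      show (i + 1 - 1).toNat = (i - 1).toNat + 1 by omega, pow_succ, ← mul_assoc,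
      mul_neg_one, ← ih (by omega) (j + 1) (by omega)]
    rcases le_or_gt j n with hjn | hjn
    · exact eq_neg_of_add_eq_zero_left (hrec i j (mem_gridBox.2 ⟨hi, by omega, hj, hjn⟩))
    · rw [hf _ (fun h => by rw [mem_gridBox] at h; omega),
        hf _ (fun h => by rw [mem_gridBox] at h; omega), neg_zero]

lemma apply_one_eq_zero {s : ℤ} (hs : m < s) : f (1, s) = 0 := by
  rcases Nat.eq_zero_or_pos m with rfl | hm
  · exact hf _ (fun h => by rw [mem_gridBox] at h; omega)
  have hlast : f (m, s - m + 1) = 0 := by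
    rcases le_or_gt (s - m) n with hsn | hsn
    · have h := hrec m (s - m) (mem_gridBox.2 ⟨by omega, le_rfl, by omega, hsn⟩)
      rwa [hf (m + 1, s - m) (fun h => by rw [mem_gridBox] at h; omega), zero_add] at h
    · exact hf _ (fun h => by rw [mem_gridBox] at h; omega)
  rw [apply_eq_apply_one_mul hf hrec (by omega) le_rfl _ (by omega),
    show (m : ℤ) + (s - m + 1) - 1 = s by ring] at hlast
  exact ((isUnit_neg_one.pow _).mul_left_eq_zero).1 hlast

lemma eq_sum_smul_signedAntidiagonal :
    f = ∑ s ∈ Finset.Icc (1 : ℤ) m, f (1, s) • signedAntidiagonal m n s := by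
  funext ⟨i, j⟩
  simp only [Finset.sum_apply, Pi.smul_apply, smul_eq_mul, signedAntidiagonal]
  by_cases hq : (i, j) ∈ gridBox m n
  · rw [mem_gridBox] at hq
    rw [Finset.sum_eq_single (i + j - 1), if_pos ⟨mem_gridBox.2 hq, by omega⟩,
      apply_eq_apply_one_mul hf hrec hq.1 hq.2.1 j hq.2.2.1]
    · intro s _ hs
      rw [if_neg (by omega), mul_zero]
    · intro hs
      rw [apply_one_eq_zero hf hrec (by rw [Finset.mem_Icc] at hs; omega), zero_mul]
  · rw [hf _ hq]
    exact (Finset.sum_eq_zero fun s _ => by rw [if_neg (by tauto), mul_zero]).symm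

end AlternatesOnAntidiagonals

lemma alternatesOnAntidiagonals_signedAntidiagonal (hmn : m ≤ n) {s : ℤ} (hs : s ≤ m) :
    AlternatesOnAntidiagonals m n (signedAntidiagonal (R := R) m n s) := by
  intro i j hij
  rw [mem_gridBox] at hij
  simp only [signedAntidiagonal, mem_gridBox]
  split_ifs with h₁ h₂ h₂
  · rw [show (i + 1 - 1).toNat = (i - 1).toNat + 1 by omega, pow_succ, mul_neg_one,
      neg_add_cancel]
  all_goals first | omega | simp

lemma linearIndependent_signedAntidiagonal (hmn : m ≤ n) :
    LinearIndependent R (fun s : Set.Icc (1 : ℤ) m => signedAntidiagonal (R := R) m n s) := by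
  rw [Fintype.linearIndependent_iff]
  intro g hg t
  have ht := congr_fun hg (1, t)
  simp only [Finset.sum_apply, Pi.smul_apply, smul_eq_mul, signedAntidiagonal, Pi.zero_apply] at ht
  obtain ⟨ht1, htm⟩ := t.2
  rwa [Finset.sum_eq_single t (fun s _ hst => by
      rw [if_neg (fun h => hst (Subtype.ext (by omega))), mul_zero]) (by simp),
    if_pos ⟨mem_gridBox.2 ⟨le_rfl, by omega, ht1, by omega⟩, by ring⟩, sub_self,
    Int.toNat_zero, pow_zero, mul_one] at ht

end Antidiagonal

section Grid

variable {R V : Type*} [Ring R] [AddCommGroup V] [Module R V] {m n : ℕ}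

def gridIndex (p : Fin m × Fin n) : ℤ × ℤ :=
  ((((p.1 : ℕ) + 1 : ℕ) : ℤ), (((p.2 : ℕ) + 1 : ℕ) : ℤ))

lemma gridIndex_injective : Function.Injective (gridIndex (m := m) (n := n)) := by
  intro p q h
  simp only [gridIndex, Prod.mk.injEq] at h
  ext <;> omega

lemma range_gridIndex : Set.range (gridIndex (m := m) (n := n)) = gridBox m n := by
  ext ⟨i, j⟩
  rw [mem_gridBox]
  constructor
  · rintro ⟨p, hp⟩
    simp only [gridIndex, Prod.mk.injEq] at hp
    omega
  · intro h
    exact ⟨(⟨(i - 1).toNat, by omega⟩, ⟨(j - 1).toNat, by omega⟩), by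
      simp only [gridIndex, Prod.mk.injEq]; omega⟩

noncomputable def gridCoord (b : Module.Basis (Fin m × Fin n) R V) : V →ₗ[R] ℤ × ℤ → R :=
  Finsupp.lcoeFun ∘ₗ Finsupp.lmapDomain R R gridIndex ∘ₗ b.repr.toLinearMap

variable (b : Module.Basis (Fin m × Fin n) R V)

lemma gridCoord_injective : Function.Injective (gridCoord b) :=
  DFunLike.coe_injective.comp ((Finsupp.mapDomain_injective gridIndex_injective).comp
    b.repr.injective)

lemma gridCoord_apply_of_notMem (w : V) : ∀ q ∉ gridBox m n, gridCoord b w q = 0 :=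
  fun _ hq => Finsupp.mapDomain_of_notMem_range _ _ (by rwa [range_gridIndex])

lemma gridCoord_basis (p : Fin m × Fin n) :
    gridCoord b (b p) = Finsupp.single (gridIndex p) 1 := by
  simp [gridCoord, Finsupp.mapDomain_single]

variable {b} {v : ℤ → ℤ → V} (hb : ∀ p, b p = v (gridIndex p).1 (gridIndex p).2)
  (hv0 : ∀ i j : ℤ, (i < 1 ∨ (m : ℤ) < i ∨ j < 1 ∨ (n : ℤ) < j) → v i j = 0)
include hb hv0

lemma gridCoord_apply (k l : ℤ) (q : ℤ × ℤ) :
    gridCoord b (v k l) q = if (k, l) = q ∧ q ∈ gridBox m n then 1 else 0 := by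
  by_cases hkl : (k, l) ∈ gridBox m n
  · obtain ⟨p, hp⟩ := (range_gridIndex (m := m) (n := n)).ge hkl
    have hv : v k l = b p := by rw [hb, hp]
    rw [hv, gridCoord_basis, hp, Finsupp.single_apply]
    by_cases h : (k, l) = q
    · subst h; simp [hkl]
    · simp [h]
  · rw [mem_gridBox] at hkl
    rw [hv0 k l (by omega), map_zero, Pi.zero_apply, if_neg]
    rintro ⟨rfl, hq⟩
    exact hkl (mem_gridBox.1 hq)

lemma gridCoord_map {N : V →ₗ[R] V}
    (hN : ∀ i j : ℤ, 1 ≤ i → i ≤ (m : ℤ) → 1 ≤ j → j ≤ (n : ℤ) →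
      N (v i j) = v (i - 1) j + v i (j - 1))
    (w : V) {i j : ℤ} (hij : (i, j) ∈ gridBox m n) :
    gridCoord b (N w) (i, j) = gridCoord b w (i + 1, j) + gridCoord b w (i, j + 1) := by
  suffices (LinearMap.proj (i, j) ∘ₗ gridCoord b ∘ₗ N : V →ₗ[R] R) =
      LinearMap.proj (i + 1, j) ∘ₗ gridCoord b + LinearMap.proj (i, j + 1) ∘ₗ gridCoord b from
    by simpa only [LinearMap.comp_apply, LinearMap.add_apply, LinearMap.proj_apply] using
      LinearMap.congr_fun this w
  refine b.ext fun p => ?_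
  rcases hq : gridIndex p with ⟨k, l⟩
  have hkl := mem_gridBox.1 (hq ▸ (range_gridIndex (m := m) (n := n)).le ⟨p, rfl⟩)
  rw [mem_gridBox] at hij
  simp only [LinearMap.comp_apply, LinearMap.add_apply, LinearMap.proj_apply, hb, hq,
    hN k l hkl.1 hkl.2.1 hkl.2.2.1 hkl.2.2.2, map_add, gridCoord_apply hb hv0,
    Prod.mk.injEq, mem_gridBox]
  congr 1 <;> congr 1 <;> simp only [eq_iff_iff] <;> omega

variable {N : V →ₗ[R] V}
  (hN : ∀ i j : ℤ, 1 ≤ i → i ≤ (m : ℤ) → 1 ≤ j → j ≤ (n : ℤ) →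
    N (v i j) = v (i - 1) j + v i (j - 1))
include hN

lemma map_eq_zero_iff_alternatesOnAntidiagonals (w : V) :
    N w = 0 ↔ AlternatesOnAntidiagonals m n (gridCoord b w) := by
  constructor
  · intro hw i j hij
    rw [← gridCoord_map hb hv0 hN w hij, hw, map_zero, Pi.zero_apply]
  · intro hrec
    refine gridCoord_injective b ?_
    funext ⟨i, j⟩
    rw [map_zero, Pi.zero_apply]
    by_cases hij : (i, j) ∈ gridBox m n
    · rw [gridCoord_map hb hv0 hN w hij, hrec i j hij]
    · exact gridCoord_apply_of_notMem b (N w) _ hij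

omit hN in
lemma gridCoord_signedAntidiagonalSum {x : ℤ → V}
    (hx : ∀ i : ℤ, x i =
      ∑ j ∈ Finset.Icc (1 : ℤ) i, ((-1 : R) ^ (j - 1).toNat) • v j (i + 1 - j)) (s : ℤ) :
    gridCoord b (x s) = signedAntidiagonal m n s := by
  funext ⟨k, l⟩
  simp only [hx, map_sum, map_smul, Finset.sum_apply, Pi.smul_apply, smul_eq_mul,
    gridCoord_apply hb hv0, signedAntidiagonal, Prod.mk.injEq]
  by_cases hkl : (k, l) ∈ gridBox m n
  · have hk := mem_gridBox.1 hkl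
    rw [Finset.sum_eq_single k (fun j _ hj => by rw [if_neg (by tauto), mul_zero])]
    · by_cases hs : k + l = s + 1
      · rw [if_pos ⟨⟨rfl, by omega⟩, hkl⟩, if_pos ⟨hkl, hs⟩, mul_one]
      · rw [if_neg (by omega), if_neg (by tauto), mul_zero]
    · intro hk'
      rw [Finset.mem_Icc] at hk'
      rw [if_neg (by omega), mul_zero]
  · rw [if_neg (by tauto)]
    exact Finset.sum_eq_zero fun j _ => by rw [if_neg (by tauto), mul_zero]

variable {x : ℤ → V}
  (hx : ∀ i : ℤ, x i =
    ∑ j ∈ Finset.Icc (1 : ℤ) i, ((-1 : R) ^ (j - 1).toNat) • v j (i + 1 - j))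
include hx

theorem ker_eq_span_signedAntidiagonalSums (hmn : m ≤ n) :
    LinearMap.ker N = Submodule.span R {z | ∃ i : ℤ, 1 ≤ i ∧ i ≤ (m : ℤ) ∧ z = x i} := by
  apply le_antisymm
  · intro w hw
    have hrec := (map_eq_zero_iff_alternatesOnAntidiagonals hb hv0 hN w).1 hw
    have hw' : w = ∑ s ∈ Finset.Icc (1 : ℤ) m, gridCoord b w (1, s) • x s := by
      refine gridCoord_injective b ?_
      simp only [map_sum, map_smul, gridCoord_signedAntidiagonalSum hb hv0 hx]
      exact hrec.eq_sum_smul_signedAntidiagonal (gridCoord_apply_of_notMem b w)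
    rw [hw']
    refine Submodule.sum_mem _ fun s hs => Submodule.smul_mem _ _ (Submodule.subset_span ?_)
    rw [Finset.mem_Icc] at hs
    exact ⟨s, hs.1, hs.2, rfl⟩
  · rw [Submodule.span_le]
    rintro _ ⟨s, -, hsm, rfl⟩
    rw [SetLike.mem_coe, LinearMap.mem_ker, map_eq_zero_iff_alternatesOnAntidiagonals hb hv0 hN,
      gridCoord_signedAntidiagonalSum hb hv0 hx]
    exact alternatesOnAntidiagonals_signedAntidiagonal hmn hsm

omit hN in
lemma linearIndependent_signedAntidiagonalSums (hmn : m ≤ n) :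
    LinearIndependent R (fun s : Set.Icc (1 : ℤ) m => x s) :=
  LinearIndependent.of_comp (gridCoord b) (by
    simpa only [Function.comp_def, gridCoord_signedAntidiagonalSum hb hv0 hx] using
      linearIndependent_signedAntidiagonal hmn)

end Grid

theorem stmt_7_general (F : Type*) [Field F] (m n : ℕ) (hmn : m ≤ n)
    (V : Type*) [AddCommGroup V] [Module F V]
    (v : ℤ → ℤ → V)
    (hv_indep : LinearIndependent F
      (fun p : Fin m × Fin n => v (((p.1 : ℕ) + 1 : ℕ) : ℤ) (((p.2 : ℕ) + 1 : ℕ) : ℤ)))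
    (hv_span : Submodule.span F
      (Set.range (fun p : Fin m × Fin n =>
        v (((p.1 : ℕ) + 1 : ℕ) : ℤ) (((p.2 : ℕ) + 1 : ℕ) : ℤ))) = ⊤)
    (hv0 : ∀ i j : ℤ, (i < 1 ∨ (m : ℤ) < i ∨ j < 1 ∨ (n : ℤ) < j) → v i j = 0)
    (N : V →ₗ[F] V)
    (hN : ∀ i j : ℤ, 1 ≤ i → i ≤ (m : ℤ) → 1 ≤ j → j ≤ (n : ℤ) →
      N (v i j) = v (i - 1) j + v i (j - 1))
    (x : ℤ → V)
    (hx : ∀ i : ℤ, x i =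
      ∑ j ∈ Finset.Icc (1 : ℤ) i, ((-1 : F) ^ (j - 1).toNat) • v j (i + 1 - j)) :
    LinearMap.ker N = Submodule.span F {z | ∃ i : ℤ, 1 ≤ i ∧ i ≤ (m : ℤ) ∧ z = x i} ∧
      Module.finrank F (LinearMap.ker N) = m := by
  let b := Module.Basis.mk hv_indep hv_span.ge
  have hb : ∀ p, b p = v (gridIndex p).1 (gridIndex p).2 := Module.Basis.mk_apply _ _
  have hker := ker_eq_span_signedAntidiagonalSums hb hv0 hN hx hmn
  have hrange : {z | ∃ i : ℤ, 1 ≤ i ∧ i ≤ (m : ℤ) ∧ z = x i} =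
      Set.range fun s : Set.Icc (1 : ℤ) m => x s := by
    ext z
    simp [eq_comm, and_assoc]
  refine ⟨hker, ?_⟩
  rw [hker, hrange, finrank_span_eq_card (linearIndependent_signedAntidiagonalSums hb hv0 hx hmn)]
  simp

/-- The kernel of N equals the span of {x_1, …, x_m}; in particular,
the kernel of N has dimension m over F. -/
theorem stmt_7 (F : Type*) [Field F] (m n : ℕ) (hm : 0 < m) (hmn : m ≤ n)
    (V : Type*) [AddCommGroup V] [Module F V]
    (v : ℤ → ℤ → V)
    (hv_indep : LinearIndependent F
      (fun p : Fin m × Fin n => v (((p.1 : ℕ) + 1 : ℕ) : ℤ) (((p.2 : ℕ) + 1 : ℕ) : ℤ)))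
    (hv_span : Submodule.span F
      (Set.range (fun p : Fin m × Fin n =>
        v (((p.1 : ℕ) + 1 : ℕ) : ℤ) (((p.2 : ℕ) + 1 : ℕ) : ℤ))) = ⊤)
    (hv0 : ∀ i j : ℤ, (i < 1 ∨ (m : ℤ) < i ∨ j < 1 ∨ (n : ℤ) < j) → v i j = 0)
    (N : V →ₗ[F] V)
    (hN : ∀ i j : ℤ, 1 ≤ i → i ≤ (m : ℤ) → 1 ≤ j → j ≤ (n : ℤ) →
      N (v i j) = v (i - 1) j + v i (j - 1))
    (x : ℤ → V)
    (hx : ∀ i : ℤ, x i =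
      ∑ j ∈ Finset.Icc (1 : ℤ) i, ((-1 : F) ^ (j - 1).toNat) • v j (i + 1 - j)) :
    LinearMap.ker N = Submodule.span F {z | ∃ i : ℤ, 1 ≤ i ∧ i ≤ (m : ℤ) ∧ z = x i} ∧
      Module.finrank F (LinearMap.ker N) = m :=
  stmt_7_general F m n hmn V v hv_indep hv_span hv0 N hN x hx
end

section
/- Let r and s be integers with 1 ≤ r < s ≤ m+n−1. Then N^{s−r}(D_s) ⊆ D_r, and the matrix of the restriction N^{s−r} : D_s → D_r with respect to the ordered bases B_s (of the domain) and B_r (of the codomain) is the (M_r−m_r+1) × (M_s−m_s+1) matrix whose (i,j)-entry is the image in F of the binomial coefficient C(s−r, m_s−m_r+j−i), interpreted as 0 when m_s−m_r+j−i < 0 or m_s−m_r+j−i > s−r. -/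
/-!
On the grid vectors `N` is the sum of the two commuting shifts `v i j ↦ v (i - 1) j` and
`v i j ↦ v i (j - 1)`, so `N ^ k (v i j) = ∑ C(k, a) v (i - a) (j - k + a)`. Since `v` vanishes
off the grid, the step rule also holds on the lower and left edges, which is what lets the
binomial expansion go through. Every term lies on the antidiagonal `r = s - k`, and the sum over
that antidiagonal can be reindexed along `B_r` because the terms outside `[m_r, M_r]` vanish.
-/

/-- Integer binomial coefficient `C(x,y)`, interpreted as `0` when `y < 0` or `y > x`. -/
def icho (x y : ℤ) : ℤ :=
  if 0 ≤ y ∧ y ≤ x then (x.toNat.choose y.toNat : ℤ) else 0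

open Finset

lemma icho_natCast (k t : ℕ) : icho k t = k.choose t := by
  rcases le_or_gt t k with h | h
  · simp [icho, h]
  · simp [icho, Nat.choose_eq_zero_of_lt h]

section Grid

variable {V : Type*}

def VanishesOffGrid [Zero V] (m n : ℕ) (v : ℤ → ℤ → V) : Prop :=
  ∀ i j : ℤ, (i < 1 ∨ (m : ℤ) < i ∨ j < 1 ∨ (n : ℤ) < j) → v i j = 0

def IsGridShift [Add V] (m n : ℕ) (v : ℤ → ℤ → V) (N : V → V) : Prop :=
  ∀ i j : ℤ, 1 ≤ i → i ≤ (m : ℤ) → 1 ≤ j → j ≤ (n : ℤ) → N (v i j) = v (i - 1) j + v i (j - 1)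

def antidiagSpan (R : Type*) [Semiring R] [AddCommMonoid V] [Module R V] (m n : ℕ)
    (v : ℤ → ℤ → V) (k : ℤ) : Submodule R V :=
  Submodule.span R
    {z | ∃ i j : ℤ, 1 ≤ i ∧ i ≤ (m : ℤ) ∧ 1 ≤ j ∧ j ≤ (n : ℤ) ∧ i + j = k + 1 ∧ z = v i j}

variable {m n : ℕ} {v : ℤ → ℤ → V}

section AddCommMonoid

variable {R : Type*} [Semiring R] [AddCommMonoid V] [Module R V] {N : Module.End R V}

lemma mem_antidiagSpan (hv0 : VanishesOffGrid m n v) {i j k : ℤ} (h : i + j = k + 1) :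
    v i j ∈ antidiagSpan R m n v k := by
  by_cases hij : 1 ≤ i ∧ i ≤ (m : ℤ) ∧ 1 ≤ j ∧ j ≤ (n : ℤ)
  · exact Submodule.subset_span ⟨i, j, hij.1, hij.2.1, hij.2.2.1, hij.2.2.2, h, rfl⟩
  · rw [hv0 i j (by omega)]
    exact zero_mem _

lemma IsGridShift.apply_eq_add (hN : IsGridShift m n v N) (hv0 : VanishesOffGrid m n v)
    {i j : ℤ} (hi : i ≤ m) (hj : j ≤ n) : N (v i j) = v (i - 1) j + v i (j - 1) := by
  by_cases hij : 1 ≤ i ∧ 1 ≤ j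
  · exact hN i j hij.1 hi hij.2 hj
  · rw [hv0 i j (by omega), hv0 (i - 1) j (by omega), hv0 i (j - 1) (by omega), map_zero,
      add_zero]

lemma IsGridShift.pow_apply_eq_sum_antidiagonal (hN : IsGridShift m n v N)
    (hv0 : VanishesOffGrid m n v) (k : ℕ) {i j : ℤ} (hi : i ≤ m) (hj : j ≤ n) :
    (N ^ k) (v i j) = ∑ p ∈ antidiagonal k, k.choose p.1 • v (i - p.1) (j - p.2) := by
  induction k generalizing i j with
  | zero => simp
  | succ k ih =>
    rw [pow_succ, Module.End.mul_apply, hN.apply_eq_add hv0 hi hj, map_add, ih (by omega) hj,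
      ih hi (by omega), sum_antidiagonal_choose_succ_nsmul (fun a b => v (i - a) (j - b)) k,
      add_comm]
    congr 1
    · refine sum_congr rfl fun p _ => ?_
      push_cast
      ring_nf
    · refine sum_congr rfl fun p hp => ?_
      rw [Nat.choose_symm_of_eq_add (mem_antidiagonal.mp hp).symm]
      push_cast
      ring_nf

lemma IsGridShift.antidiagSpan_le_comap_pow (hN : IsGridShift m n v N)
    (hv0 : VanishesOffGrid m n v) {k : ℕ} {r s : ℤ} (h : r + k = s) :
    antidiagSpan R m n v s ≤ (antidiagSpan R m n v r).comap (N ^ k) := by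
  refine Submodule.span_le.mpr ?_
  rintro _ ⟨i, j, -, hi, -, hj, hij, rfl⟩
  rw [SetLike.mem_coe, Submodule.mem_comap, hN.pow_apply_eq_sum_antidiagonal hv0 k hi hj]
  refine sum_mem fun p hp => nsmul_mem (mem_antidiagSpan hv0 ?_) _
  have := mem_antidiagonal.mp hp
  omega

end AddCommMonoid

section AddCommGroup

variable {R : Type*} [Ring R] [AddCommGroup V] [Module R V] {N : Module.End R V}

lemma IsGridShift.pow_apply_eq_finsum (hN : IsGridShift m n v N)
    (hv0 : VanishesOffGrid m n v) (k : ℕ) {i j : ℤ} (hi : i ≤ m) (hj : j ≤ n) :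
    (N ^ k) (v i j) = ∑ᶠ a : ℤ, (icho k (i - a) : R) • v a (i + j - k - a) := by
  have hsupp : (Function.support fun a : ℤ => (icho k (i - a) : R) • v a (i + j - k - a)) ⊆
      ↑((antidiagonal k).image fun p => i - p.1) := by
    intro a ha
    have hc : icho k (i - a) ≠ 0 := fun h0 => ha (by simp only [h0, Int.cast_zero, zero_smul])
    have : 0 ≤ i - a ∧ i - a ≤ k := by
      by_contra h
      exact hc (if_neg h)
    simp only [coe_image, Set.mem_image, SetLike.mem_coe, HasAntidiagonal.mem_antidiagonal,
      Prod.exists]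
    exact ⟨(i - a).toNat, k - (i - a).toNat, by omega, by omega⟩
  rw [finsum_eq_sum_of_support_subset _ hsupp, sum_image (fun p hp q hq h => ?_),
    hN.pow_apply_eq_sum_antidiagonal hv0 k hi hj]
  · refine sum_congr rfl fun p hp => ?_
    have hp := mem_antidiagonal.mp hp
    rw [sub_sub_cancel, icho_natCast, Int.cast_natCast, Nat.cast_smul_eq_nsmul]
    congr 2
    omega
  · have := mem_antidiagonal.mp hp
    have := mem_antidiagonal.mp hq
    exact Prod.ext (by omega) (by omega)

lemma VanishesOffGrid.finsum_eq_sum_Icc (hv0 : VanishesOffGrid m n v) (c : ℤ → R) (r : ℤ) :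
    ∑ᶠ a : ℤ, c a • v a (r + 1 - a) =
      ∑ i ∈ Icc (1 : ℤ) (min r (m : ℤ) - max 1 (r + 1 - (n : ℤ)) + 1),
        c (max 1 (r + 1 - (n : ℤ)) + i - 1) •
          v (max 1 (r + 1 - (n : ℤ)) + i - 1) (r + 1 - (max 1 (r + 1 - (n : ℤ)) + i - 1)) := by
  set lo := max 1 (r + 1 - (n : ℤ))
  set hi := min r (m : ℤ)
  have hsupp : (Function.support fun a : ℤ => c a • v a (r + 1 - a)) ⊆ ↑(Icc lo hi) := by
    intro a ha
    by_contra h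
    simp only [coe_Icc, Set.mem_Icc, lo, hi] at h
    exact ha (by simp only [hv0 a (r + 1 - a) (by omega), smul_zero])
  have hIcc : Icc lo hi = (Icc 1 (hi - lo + 1)).map (addRightEmbedding (lo - 1)) := by
    rw [map_add_right_Icc]
    congr 1 <;> ring
  rw [finsum_eq_sum_of_support_subset _ hsupp, hIcc, sum_map]
  refine sum_congr rfl fun i _ => ?_
  simp only [addRightEmbedding_apply]
  ring_nf

end AddCommGroup

end Grid

theorem stmt_8_general (F : Type*) [Field F] (m n : ℕ)
    (V : Type*) [AddCommGroup V] [Module F V]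
    (v : ℤ → ℤ → V)
    (hv0 : ∀ i j : ℤ, (i < 1 ∨ (m : ℤ) < i ∨ j < 1 ∨ (n : ℤ) < j) → v i j = 0)
    (N : V →ₗ[F] V)
    (hN : ∀ i j : ℤ, 1 ≤ i → i ≤ (m : ℤ) → 1 ≤ j → j ≤ (n : ℤ) →
      N (v i j) = v (i - 1) j + v i (j - 1))
    (D : ℤ → Submodule F V)
    (hD : ∀ k : ℤ, D k = Submodule.span F
      {z | ∃ i j : ℤ, 1 ≤ i ∧ i ≤ (m : ℤ) ∧ 1 ≤ j ∧ j ≤ (n : ℤ) ∧ i + j = k + 1 ∧ z = v i j})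
    (r s : ℤ) (hrs : r < s) :
    (∀ z ∈ D s, (N ^ (s - r).toNat) z ∈ D r) ∧
      (∀ j : ℤ, 1 ≤ j → j ≤ min s (m : ℤ) - max 1 (s + 1 - (n : ℤ)) + 1 →
        (N ^ (s - r).toNat)
            (v (max 1 (s + 1 - (n : ℤ)) + j - 1) (s + 1 - (max 1 (s + 1 - (n : ℤ)) + j - 1))) =
          ∑ i ∈ Finset.Icc (1 : ℤ) (min r (m : ℤ) - max 1 (r + 1 - (n : ℤ)) + 1),
            (icho (s - r) (max 1 (s + 1 - (n : ℤ)) - max 1 (r + 1 - (n : ℤ)) + j - i) : F) •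
              v (max 1 (r + 1 - (n : ℤ)) + i - 1)
                (r + 1 - (max 1 (r + 1 - (n : ℤ)) + i - 1))) := by
  obtain ⟨k, hk⟩ : ∃ k : ℕ, s - r = k := ⟨(s - r).toNat, by omega⟩
  rw [hk, Int.toNat_natCast]
  refine ⟨fun z hz => ?_, fun j hj1 hj2 => ?_⟩
  · rw [hD] at hz ⊢
    exact IsGridShift.antidiagSpan_le_comap_pow hN hv0 (by omega) hz
  · set i0 := max 1 (s + 1 - (n : ℤ)) + j - 1
    calc (N ^ k) (v i0 (s + 1 - i0))
        = ∑ᶠ a : ℤ, (icho k (i0 - a) : F) • v a (r + 1 - a) := by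
          rw [IsGridShift.pow_apply_eq_finsum hN hv0 k (by omega) (by omega)]
          refine finsum_congr fun a => ?_
          congr 2
          omega
      _ = _ := by
          rw [VanishesOffGrid.finsum_eq_sum_Icc hv0]
          refine Finset.sum_congr rfl fun i _ => ?_
          congr 3
          omega

/-- For 1 ≤ r < s ≤ m+n−1, N^{s−r}(D_s) ⊆ D_r, and the matrix of
N^{s−r} : D_s → D_r with respect to the ordered bases B_s and B_r has (i,j)-entry
the image in F of C(s−r, m_s−m_r+j−i), where m_r = max(1, r+1−n), M_r = min(r, m)
and B_r = (v_{m_r+i-1, r+1-(m_r+i-1)})_{i=1,…,M_r−m_r+1}. -/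
theorem stmt_8 (F : Type*) [Field F] (m n : ℕ) (hm : 0 < m) (hmn : m ≤ n)
    (V : Type*) [AddCommGroup V] [Module F V]
    (v : ℤ → ℤ → V)
    (hv_indep : LinearIndependent F
      (fun p : Fin m × Fin n => v (((p.1 : ℕ) + 1 : ℕ) : ℤ) (((p.2 : ℕ) + 1 : ℕ) : ℤ)))
    (hv_span : Submodule.span F
      (Set.range (fun p : Fin m × Fin n =>
        v (((p.1 : ℕ) + 1 : ℕ) : ℤ) (((p.2 : ℕ) + 1 : ℕ) : ℤ))) = ⊤)
    (hv0 : ∀ i j : ℤ, (i < 1 ∨ (m : ℤ) < i ∨ j < 1 ∨ (n : ℤ) < j) → v i j = 0)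
    (N : V →ₗ[F] V)
    (hN : ∀ i j : ℤ, 1 ≤ i → i ≤ (m : ℤ) → 1 ≤ j → j ≤ (n : ℤ) →
      N (v i j) = v (i - 1) j + v i (j - 1))
    (D : ℤ → Submodule F V)
    (hD : ∀ k : ℤ, D k = Submodule.span F
      {z | ∃ i j : ℤ, 1 ≤ i ∧ i ≤ (m : ℤ) ∧ 1 ≤ j ∧ j ≤ (n : ℤ) ∧ i + j = k + 1 ∧ z = v i j})
    (r s : ℤ) (hr : 1 ≤ r) (hrs : r < s) (hs : s ≤ (m : ℤ) + n - 1) :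
    (∀ z ∈ D s, (N ^ (s - r).toNat) z ∈ D r) ∧
      (∀ j : ℤ, 1 ≤ j → j ≤ min s (m : ℤ) - max 1 (s + 1 - (n : ℤ)) + 1 →
        (N ^ (s - r).toNat)
            (v (max 1 (s + 1 - (n : ℤ)) + j - 1) (s + 1 - (max 1 (s + 1 - (n : ℤ)) + j - 1))) =
          ∑ i ∈ Finset.Icc (1 : ℤ) (min r (m : ℤ) - max 1 (r + 1 - (n : ℤ)) + 1),
            (icho (s - r) (max 1 (s + 1 - (n : ℤ)) - max 1 (r + 1 - (n : ℤ)) + j - i) : F) •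
              v (max 1 (r + 1 - (n : ℤ)) + i - 1)
                (r + 1 - (max 1 (r + 1 - (n : ℤ)) + i - 1))) :=
  stmt_8_general F m n V v hv0 N hN D hD r s hrs
end

section
/- Let k ≥ 1 and let a, b be integers with 0 ≤ b ≤ a. Let M_ℚ be the k×k matrix over ℚ whose (i,j)-entry is the binomial coefficient C(a, b+j−i) for 1 ≤ i,j ≤ k (interpreted as 0 when b+j−i < 0 or b+j−i > a). Then det M_ℚ = ∏_{i=0}^{k−1} C(a+i, b) / C(b+i, b). -/
open Finset Matrix

theorem icho_natCast_s9 (x y : ℕ) : icho x y = x.choose y := by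
  unfold icho
  split_ifs with h
  · simp
  · rw [Nat.choose_eq_zero_of_lt (by omega), Nat.cast_zero]

theorem icho_of_neg (x : ℤ) {y : ℤ} (hy : y < 0) : icho x y = 0 :=
  if_neg fun h => hy.not_ge h.1

theorem Nat.sum_range_choose_mul_ite_choose_sub {i k : ℕ} (hik : i < k) (A t : ℕ) :
    ∑ s ∈ range k, i.choose s * (if s ≤ t then A.choose (t - s) else 0) =
      (A + i).choose t := by
  set f : ℕ → ℕ := fun s => i.choose s * (if s ≤ t then A.choose (t - s) else 0)
  have hf_gt_i : ∀ s ≥ i + 1, f s = 0 := fun s hs => by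
    simp [f, Nat.choose_eq_zero_of_lt (show i < s by omega)]
  have hf_gt_t : ∀ s ≥ t + 1, f s = 0 := fun s hs => by
    simp [f, show ¬s ≤ t by omega]
  calc ∑ s ∈ range k, f s
      = ∑ s ∈ range (i + 1 + t), f s :=
        (eventually_constant_sum hf_gt_i hik).trans
          (eventually_constant_sum hf_gt_i (by omega)).symm
    _ = ∑ s ∈ range (t + 1), f s := eventually_constant_sum hf_gt_t (by omega)
    _ = ∑ s ∈ range (t + 1), i.choose s * A.choose (t - s) :=
        sum_congr rfl fun s hs => by simp [f, show s ≤ t by simpa [Nat.lt_succ_iff] using hs]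
    _ = (A + i).choose t := by
        rw [add_comm A i, Nat.add_choose_eq, Nat.sum_antidiagonal_eq_sum_range_succ_mk]

theorem Nat.add_choose_add_mul_choose {A B : ℕ} (hBA : B ≤ A) (i j : ℕ) :
    (A + i).choose (B + j) * (B + j).choose B = (A + i).choose B * (A - B + i).choose j := by
  rcases le_or_gt (B + j) (A + i) with hle | hlt
  · rw [Nat.choose_mul (Nat.le_add_right _ _)]
    congr 2 <;> omega
  · rw [Nat.choose_eq_zero_of_lt hlt, Nat.choose_eq_zero_of_lt (by omega : A - B + i < j),
      zero_mul, mul_zero]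

variable (R : Type*)

def pascalMatrix [Semiring R] (k : ℕ) : Matrix (Fin k) (Fin k) R :=
  of fun i j => ((i : ℕ).choose j : R)

-- The `if` makes `C(A, c + j - i)` vanish for `c + j < i`, where `ℕ`-subtraction would
-- give `C(A, 0)`.
def shiftedBinomialMatrix [Semiring R] (k A c : ℕ) : Matrix (Fin k) (Fin k) R :=
  of fun i j => if (i : ℕ) ≤ c + j then (A.choose (c + j - i) : R) else 0

variable {R}

theorem det_pascalMatrix [CommRing R] (k : ℕ) : (pascalMatrix R k).det = 1 := by
  rw [det_of_isLowerTriangular]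
  · simp [pascalMatrix]
  · intro i j hij
    simp [pascalMatrix, Nat.choose_eq_zero_of_lt (show (i : ℕ) < j from hij)]

theorem det_shiftedBinomialMatrix_zero [CommRing R] (k A : ℕ) :
    (shiftedBinomialMatrix R k A 0).det = 1 := by
  rw [det_of_isUpperTriangular]
  · simp [shiftedBinomialMatrix]
  · intro i j hij
    simp only [shiftedBinomialMatrix, of_apply, zero_add]
    exact if_neg (not_le.mpr hij)

theorem pascalMatrix_mul_shiftedBinomialMatrix_apply [Semiring R] (k A c : ℕ) (i j : Fin k) :
    (pascalMatrix R k * shiftedBinomialMatrix R k A c) i j = ((A + i).choose (c + j) : R) := by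
  rw [← Nat.sum_range_choose_mul_ite_choose_sub i.isLt, ← Fin.sum_univ_eq_sum_range, mul_apply]
  push_cast
  refine sum_congr rfl fun s _ => ?_
  simp only [pascalMatrix, shiftedBinomialMatrix, of_apply]

theorem det_shiftedBinomialMatrix {K : Type*} [Field K] [CharZero K] {A B : ℕ} (hBA : B ≤ A)
    (k : ℕ) :
    (shiftedBinomialMatrix K k A B).det =
      ∏ i : Fin k, ((A + i).choose B : K) / (B + i).choose B := by
  set L := pascalMatrix K k
  have hfactor : L * shiftedBinomialMatrix K k A B =
      diagonal (fun i : Fin k => ((A + i).choose B : K)) *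
        (L * shiftedBinomialMatrix K k (A - B) 0) *
        diagonal (fun j : Fin k => ((B + j).choose B : K)⁻¹) := by
    ext i j
    have hne : ((B + j).choose B : K) ≠ 0 :=
      Nat.cast_ne_zero.mpr (Nat.choose_pos (Nat.le_add_right _ _)).ne'
    rw [mul_diagonal, diagonal_mul, pascalMatrix_mul_shiftedBinomialMatrix_apply,
      pascalMatrix_mul_shiftedBinomialMatrix_apply, zero_add, eq_mul_inv_iff_mul_eq₀ hne]
    exact_mod_cast Nat.add_choose_add_mul_choose hBA i j
  calc (shiftedBinomialMatrix K k A B).det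
      = (L * shiftedBinomialMatrix K k A B).det := by rw [det_mul, det_pascalMatrix, one_mul]
    _ = _ := by
      rw [hfactor, det_mul, det_mul, det_mul, det_pascalMatrix, det_shiftedBinomialMatrix_zero,
        det_diagonal, det_diagonal, one_mul, mul_one, ← prod_mul_distrib]
      simp [div_eq_mul_inv]

theorem stmt_9_general (k : ℕ) (a b : ℤ) (hb : 0 ≤ b) (hba : b ≤ a)
    (M : Matrix (Fin k) (Fin k) ℚ)
    (hM : ∀ i j : Fin k, M i j = (icho a (b + ((j : ℕ) : ℤ) - ((i : ℕ) : ℤ)) : ℚ)) :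
    M.det = ∏ i ∈ Finset.range k, (icho (a + i) b : ℚ) / (icho (b + i) b : ℚ) := by
  lift a to ℕ using hb.trans hba with A
  lift b to ℕ using hb with B
  have hMA : M = shiftedBinomialMatrix ℚ k A B := by
    ext i j
    rw [hM, shiftedBinomialMatrix, of_apply]
    split_ifs with hij
    · rw [show (B : ℤ) + j - i = ((B + j - i : ℕ) : ℤ) by omega, icho_natCast_s9,
        Int.cast_natCast]
    · rw [icho_of_neg _ (by omega), Int.cast_zero]
  rw [hMA, det_shiftedBinomialMatrix (by exact_mod_cast hba), Fin.prod_univ_eq_prod_range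
    (fun i => ((A + i).choose B : ℚ) / (B + i).choose B)]
  refine prod_congr rfl fun i _ => ?_
  simp only [← Nat.cast_add, icho_natCast_s9, Int.cast_natCast]

/-- For k ≥ 1 and integers 0 ≤ b ≤ a, the k×k rational matrix with
(i,j)-entry C(a, b+j−i) has determinant ∏_{i=0}^{k−1} C(a+i, b)/C(b+i, b). -/
theorem stmt_9 (k : ℕ) (hk : 1 ≤ k) (a b : ℤ) (hb : 0 ≤ b) (hba : b ≤ a)
    (M : Matrix (Fin k) (Fin k) ℚ)
    (hM : ∀ i j : Fin k, M i j = (icho a (b + ((j : ℕ) : ℤ) - ((i : ℕ) : ℤ)) : ℚ)) :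
    M.det = ∏ i ∈ Finset.range k, (icho (a + i) b : ℚ) / (icho (b + i) b : ℚ) :=
  stmt_9_general k a b hb hba M hM
end

section
/- Let k ≥ 1 and let a, b be integers with 0 ≤ b ≤ a. Then ∏_{i=0}^{k−1} C(b+i, b) divides ∏_{i=0}^{k−1} C(a+i, b) in ℤ; equivalently, the rational number d_k = ∏_{i=0}^{k−1} C(a+i, b)/C(b+i, b) is an integer. -/
/-!
By Kummer's theorem, the `p`-adic valuation of `C(a + i, b)` is the number of levels `t` at which
the base-`p` addition of `b` and `a - b + i` carries, i.e. at which
`(a - b + i) % p ^ t ≥ p ^ t - b % p ^ t`; for `C(b + i, b)` the same holds with `a - b` replaced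
by `0`. After exchanging the sums over `i < k` and over `t`, it suffices that for every modulus `m`
and threshold `s`, the number of `i < k` with `(c + i) % m ≥ s` is smallest at `c = 0`. Whole
periods contribute the same amount to every window, and a window of length `k ≤ m` has at most `s`
residues below `s`, whereas the initial one has exactly `k - s` residues `≥ s`.
-/

open Finset Function

namespace Nat

variable {p : ℕ → Prop} [DecidablePred p]

lemma count_add_count_not (n : ℕ) : count p n + count (fun i => ¬p i) n = n := by
  induction n with
  | zero => simp
  | succ n ih => simp only [count_succ]; split_ifs <;> omega

lemma count_le_eq_sub (s n : ℕ) : count (fun i => s ≤ i) n = n - s := by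
  induction n with
  | zero => simp
  | succ n ih => rw [count_succ, ih]; split_ifs <;> omega

lemma _root_.Function.Periodic.count_add_left {m : ℕ} (hp : Periodic p m) (c : ℕ) :
    count (fun i => p (c + i)) m = count p m := by
  induction c with
  | zero => simp
  | succ c ih =>
    have h := count_add (fun i => p (c + i)) 1 m
    rw [add_comm 1 m, count_succ, count_one, ih] at h
    simp only [hp c, add_zero, add_comm 1] at h
    simp only [add_assoc, add_comm 1]
    omega

lemma _root_.Function.Periodic.count_add_left_period_add {m : ℕ} (hp : Periodic p m) (c t : ℕ) :
    count (fun i => p (c + i)) (m + t) = count p m + count (fun i => p (c + i)) t := by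
  rw [count_add, hp.count_add_left]
  simp only [← add_assoc, add_right_comm c m, hp _]

lemma count_add_mod_lt_le {m s k : ℕ} (hk : k ≤ m) (c : ℕ) :
    count (fun i => (c + i) % m < s) k ≤ s := by
  rw [count_eq_card_filter_range]
  simpa using card_le_card_of_injOn (fun i => (c + i) % m) (t := range s)
    (fun i hi => by simpa using (mem_filter.1 hi).2)
    (fun i hi j hj h => (ModEq.add_left_cancel' c h).eq_of_lt_of_lt
      (by simp at hi; omega) (by simp at hj; omega))

lemma count_le_mod_le_count_le_add_mod {m s : ℕ} (hm : 0 < m) (c k : ℕ) :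
    count (fun i => s ≤ i % m) k ≤ count (fun i => s ≤ (c + i) % m) k := by
  induction k using Nat.strong_induction_on with
  | _ k ih =>
    rcases le_or_gt k m with hk | hk
    · have hsmall := count_add_mod_lt_le (s := s) hk c
      have hsplit := count_add_count_not (p := fun i => s ≤ (c + i) % m) k
      simp only [not_le] at hsplit
      calc count (fun i => s ≤ i % m) k ≤ count (fun i => s ≤ i) k :=
            count_mono_left fun i hi h => by rwa [mod_eq_of_lt (by omega)] at h
        _ = k - s := count_le_eq_sub s k
        _ ≤ _ := by omega
    · obtain ⟨t, rfl⟩ := Nat.exists_eq_add_of_le hk.le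
      have hper : Periodic (fun i => s ≤ i % m) m := fun i => by simp
      have h0 := hper.count_add_left_period_add 0 t
      simp only [zero_add] at h0
      rw [h0, hper.count_add_left_period_add c t]
      have := ih t (by omega)
      omega

lemma count_carry_le_count_carry_add {m : ℕ} (hm : 0 < m) (b c k : ℕ) :
    count (fun i => m ≤ b % m + i % m) k ≤ count (fun i => m ≤ b % m + (c + i) % m) k := by
  have hb : b % m < m := mod_lt b hm
  have hcarry : ∀ x, m ≤ b % m + x % m ↔ m - b % m ≤ x % m := fun x => by omega
  simpa only [hcarry] using count_le_mod_le_count_le_add_mod (s := m - b % m) hm c k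

lemma sum_factorization_choose_le {p : ℕ} (hp : p.Prime) {a b : ℕ} (hba : b ≤ a) (k : ℕ) :
    ∑ i ∈ range k, ((b + i).choose b).factorization p
      ≤ ∑ i ∈ range k, ((a + i).choose b).factorization p := by
  set B := log p (a + k) + 1
  have hlog {n : ℕ} (hn : n ≤ a + k) : log p n < B := lt_succ_of_le (log_mono_right hn)
  have hb : ∀ i ∈ range k, ((b + i).choose b).factorization p
      = #{t ∈ Ico 1 B | p ^ t ≤ b % p ^ t + i % p ^ t} := fun i hi => by
    rw [factorization_choose hp (le_add_right b i) (hlog (by simp at hi; omega)),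
      Nat.add_sub_cancel_left]
  have ha : ∀ i ∈ range k, ((a + i).choose b).factorization p
      = #{t ∈ Ico 1 B | p ^ t ≤ b % p ^ t + (a - b + i) % p ^ t} := fun i hi => by
    rw [factorization_choose hp (by omega) (hlog (by simp at hi; omega)),
      tsub_add_eq_add_tsub hba]
  have hswap (q : ℕ → ℕ) : ∑ i ∈ range k, #{t ∈ Ico 1 B | p ^ t ≤ b % p ^ t + q i % p ^ t}
      = ∑ t ∈ Ico 1 B, count (fun i => p ^ t ≤ b % p ^ t + q i % p ^ t) k := by
    simp_rw [count_eq_card_filter_range]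
    exact sum_card_bipartiteAbove_eq_sum_card_bipartiteBelow _
  rw [sum_congr rfl hb, sum_congr rfl ha]
  refine ((hswap fun i => i).trans_le ?_).trans_eq (hswap (a - b + ·)).symm
  exact sum_le_sum fun t _ => count_carry_le_count_carry_add (pow_pos hp.pos t) b (a - b) k

lemma prod_choose_dvd_prod_choose {a b : ℕ} (hba : b ≤ a) (k : ℕ) :
    ∏ i ∈ range k, (b + i).choose b ∣ ∏ i ∈ range k, (a + i).choose b := by
  have hb : ∀ i ∈ range k, (b + i).choose b ≠ 0 := fun i _ => choose_ne_zero (by omega)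
  have ha : ∀ i ∈ range k, (a + i).choose b ≠ 0 := fun i _ => choose_ne_zero (by omega)
  rw [← factorization_prime_le_iff_dvd (prod_ne_zero_iff.2 hb) (prod_ne_zero_iff.2 ha)]
  intro p hp
  rw [factorization_prod hb, factorization_prod ha, sum_apply', sum_apply']
  exact sum_factorization_choose_le hp hba k

end Nat

theorem stmt_10_general (k : ℕ) (a b : ℕ) (hba : b ≤ a) :
    (∏ i ∈ Finset.range k, ((b + i).choose b : ℤ)) ∣
        (∏ i ∈ Finset.range k, ((a + i).choose b : ℤ)) ∧
      ∃ d : ℤ, (d : ℚ) =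
        ∏ i ∈ Finset.range k, ((a + i).choose b : ℚ) / ((b + i).choose b : ℚ) := by
  obtain ⟨d, hd⟩ := Nat.prod_choose_dvd_prod_choose hba k
  have hb : ∏ i ∈ range k, ((b + i).choose b : ℚ) ≠ 0 :=
    prod_ne_zero_iff.2 fun i _ => Nat.cast_ne_zero.2 (Nat.choose_ne_zero (by omega))
  refine ⟨⟨d, by exact_mod_cast hd⟩, d, ?_⟩
  rw [prod_div_distrib, eq_div_iff hb]
  exact_mod_cast (hd.trans (mul_comm _ _)).symm

/-- For k ≥ 1 and 0 ≤ b ≤ a, ∏_{i=0}^{k−1} C(b+i, b) divides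
∏_{i=0}^{k−1} C(a+i, b) in ℤ; equivalently, d_k = ∏_{i=0}^{k−1} C(a+i,b)/C(b+i,b) ∈ ℤ. -/
theorem stmt_10 (k : ℕ) (hk : 1 ≤ k) (a b : ℕ) (hba : b ≤ a) :
    (∏ i ∈ Finset.range k, ((b + i).choose b : ℤ)) ∣
        (∏ i ∈ Finset.range k, ((a + i).choose b : ℤ)) ∧
      ∃ d : ℤ, (d : ℚ) =
        ∏ i ∈ Finset.range k, ((a + i).choose b : ℚ) / ((b + i).choose b : ℚ) :=
  stmt_10_general k a b hba
end

section
/- There exist a permutation π of {1,…,m} and elements z_i ∈ D_{m+n−i} for 1 ≤ i ≤ m such that, for each i, the span of N^{m+n−i−π(i)}(z_i) equals the span of x_{π(i)}; in particular N^{m+n−i−π(i)}(z_i) is a nonzero scalar multiple of x_{π(i)}. -/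
/-
`N` maps `D k` to `D (k - 1)`; reading off coordinates along an antidiagonal, `N` is injective
on `D k` for `k > m`, and for `k ≤ m` its kernel on `D k` is the line through `x k`. Hence, inside
`D m`, the subspaces `N ^ (n - i) (D (m + n - i))` (`0 ≤ i ≤ m`) form a complete flag, while the
subspaces `D m ⊓ ker (N ^ j)` grow by at most one dimension at each step. The relative position
of two such chains in a modular lattice is a permutation `σ`: for each `i` some
`w ∈ N ^ (n - i - 1) (D (m + n - i - 1))` lies in `ker (N ^ (σ i + 1))` but not in
`ker (N ^ σ i)`, and then `N ^ σ i w` is a nonzero vector of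
`ker N ⊓ D (m - σ i) = F ∙ x (m - σ i)`.
-/


open Module Submodule

theorem WCovBy.inf_le_of_not_inf_le {α : Type*} [Lattice α] [IsModularLattice α]
    {a a' b b' g g' : α} (hg : g ⩿ g') (ha : ¬ a' ⊓ g' ≤ a) (ha' : a' ⊓ g ≤ a) (hab : a' ≤ b)
    (hb : b ≤ b') (hb' : b' ⊓ g ≤ b) : b' ⊓ g' ≤ b := by
  have hc : ¬ a' ⊓ g' ≤ g := fun h ↦ ha ((le_inf inf_le_left h).trans ha')
  have hsup : a' ⊓ g' ⊔ g = g' :=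
    (hg.eq_or_eq le_sup_right (sup_le inf_le_right hg.le)).resolve_left
      fun h ↦ hc (h ▸ le_sup_left)
  calc b' ⊓ g' = (a' ⊓ g' ⊔ g) ⊓ b' := by rw [hsup, inf_comm]
    _ = a' ⊓ g' ⊔ g ⊓ b' := sup_inf_assoc_of_le _ (inf_le_left.trans (hab.trans hb))
    _ ≤ b := sup_le (inf_le_left.trans hab) (by rw [inf_comm]; exact hb')

-- `σ i` is the first step at which `G` meets `W (i + 1)` outside `W i`; the modular law shows
-- that distinct `i` have distinct such steps.
theorem exists_perm_flag_position {α : Type*} [Lattice α] [OrderBot α] [IsModularLattice α]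
    {m : ℕ} {W G : ℕ → α} (hW : ∀ i < m, W i < W (i + 1)) (hG : ∀ j < m, G j ⩿ G (j + 1))
    (hG0 : G 0 = ⊥) (hWG : W m ≤ G m) :
    ∃ π : Equiv.Perm (Fin m), ∀ i : Fin m,
      ¬ W (i + 1) ⊓ G (π i + 1) ≤ W i ∧ W (i + 1) ⊓ G (π i) ≤ W i := by
  classical
  have hW_mono : ∀ a b, a ≤ b → b ≤ m → W a ≤ W b := by
    intro a b hab hbm
    induction b, hab using Nat.le_induction with
    | base => exact le_rfl
    | succ b hab ih => exact (ih (by omega)).trans (hW b (by omega)).le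
  have hlast (i : Fin m) : ¬ W (i + 1) ⊓ G (m - 1 + 1) ≤ W i := by
    rw [Nat.sub_add_cancel i.pos, inf_eq_left.mpr ((hW_mono _ _ i.2 le_rfl).trans hWG)]
    exact (hW i i.2).not_ge
  have hex (i : Fin m) : ∃ j, ¬ W (i + 1) ⊓ G (j + 1) ≤ W i := ⟨m - 1, hlast i⟩
  let f (i : Fin m) : ℕ := Nat.find (hex i)
  have hf_lt (i : Fin m) : f i < m := by
    have : f i ≤ m - 1 := Nat.find_min' (hex i) (hlast i)
    have := i.pos
    omega
  have hf_min (i : Fin m) : W (i + 1) ⊓ G (f i) ≤ W i := by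
    rcases hfi : f i with _ | j
    · rw [hG0, inf_bot_eq]; exact bot_le
    · exact not_not.mp (Nat.find_min (hex i) (show j < f i by omega))
  have hf_ne (a b : Fin m) (hab : a < b) : f a ≠ f b := by
    intro hfab
    have hb : ¬ W (b + 1) ⊓ G (f b + 1) ≤ W b := Nat.find_spec (hex b)
    rw [← hfab] at hb
    exact hb ((hG _ (hf_lt a)).inf_le_of_not_inf_le (Nat.find_spec (hex a)) (hf_min a)
      (hW_mono _ _ hab b.2.le) (hW b b.2).le (hfab ▸ hf_min b))
  have hf_inj : Function.Injective fun i ↦ (⟨f i, hf_lt i⟩ : Fin m) := by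
    intro a b hab
    have hab : f a = f b := congrArg Fin.val hab
    by_contra hne
    rcases lt_or_gt_of_ne hne with h | h
    · exact hf_ne a b h hab
    · exact hf_ne b a h hab.symm
  exact ⟨Equiv.ofBijective _ (Finite.injective_iff_bijective.mp hf_inj),
    fun i ↦ ⟨Nat.find_spec (hex i), hf_min i⟩⟩

theorem Submodule.finrank_map_eq_of_disjoint_ker {K V W : Type*} [DivisionRing K]
    [AddCommGroup V] [Module K V] [AddCommGroup W] [Module K W] {f : V →ₗ[K] W}
    {p : Submodule K V} (hp : Disjoint p (LinearMap.ker f)) :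
    finrank K (p.map f) = finrank K p := by
  rw [← LinearMap.range_domRestrict]
  exact LinearMap.finrank_range_of_inj (LinearMap.injective_domRestrict_iff.mpr hp)

theorem Submodule.inf_ker_wcovBy_of_map_le_span {K V W : Type*} [DivisionRing K]
    [AddCommGroup V] [Module K V] [AddCommGroup W] [Module K W] {f : V →ₗ[K] W}
    {p : Submodule K V} {y : W} (hpy : p.map f ≤ K ∙ y) : p ⊓ LinearMap.ker f ⩿ p := by
  by_cases hp : p ≤ LinearMap.ker f
  · rw [inf_eq_left.mpr hp]
    exact WCovBy.refl p
  obtain ⟨u, hu, hfu⟩ := SetLike.not_le_iff_exists.mp hp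
  suffices p = K ∙ u ⊔ p ⊓ LinearMap.ker f by
    nth_rewrite 2 [this]
    exact wcovBy_span_singleton_sup u _
  refine le_antisymm (fun w hw ↦ ?_) (sup_le ((span_singleton_le_iff_mem u p).mpr hu) inf_le_left)
  obtain ⟨a, ha⟩ := mem_span_singleton.mp (hpy (mem_map_of_mem hu))
  obtain ⟨b, hb⟩ := mem_span_singleton.mp (hpy (mem_map_of_mem hw))
  have ha0 : a ≠ 0 := by
    rintro rfl
    exact hfu (LinearMap.mem_ker.mpr (by rw [← ha, zero_smul]))
  refine mem_sup.mpr ⟨(b / a) • u, mem_span_singleton.mpr ⟨_, rfl⟩, w - (b / a) • u,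
    ⟨sub_mem hw (smul_mem _ _ hu), LinearMap.mem_ker.mpr ?_⟩, add_sub_cancel _ _⟩
  rw [map_sub, map_smul, ← ha, ← hb, smul_smul, div_mul_cancel₀ _ ha0, sub_self]

section Grid

variable {F V : Type*} [Field F] [AddCommGroup V] [Module F V]

structure IsGridShift_s12 (m n : ℕ) (v : ℤ → ℤ → V) (N : V →ₗ[F] V) : Prop where
  linearIndependent : LinearIndependent F
    (fun p : Fin m × Fin n => v (((p.1 : ℕ) + 1 : ℕ) : ℤ) (((p.2 : ℕ) + 1 : ℕ) : ℤ))
  span_eq_top : span F (Set.range fun p : Fin m × Fin n =>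
    v (((p.1 : ℕ) + 1 : ℕ) : ℤ) (((p.2 : ℕ) + 1 : ℕ) : ℤ)) = ⊤
  eq_zero : ∀ i j : ℤ, (i < 1 ∨ (m : ℤ) < i ∨ j < 1 ∨ (n : ℤ) < j) → v i j = 0
  apply_v : ∀ i j : ℤ, 1 ≤ i → i ≤ (m : ℤ) → 1 ≤ j → j ≤ (n : ℤ) →
    N (v i j) = v (i - 1) j + v i (j - 1)

-- `antidiag F m n v k` is `D k` and `altDiag F v k` is `x k`.
variable (F) in
def antidiag (m n : ℕ) (v : ℤ → ℤ → V) (k : ℤ) : Submodule F V :=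
  span F {z | ∃ i j : ℤ, 1 ≤ i ∧ i ≤ (m : ℤ) ∧ 1 ≤ j ∧ j ≤ (n : ℤ) ∧ i + j = k + 1 ∧ z = v i j}

variable (F) in
noncomputable def altDiag (v : ℤ → ℤ → V) (k : ℤ) : V :=
  ∑ j ∈ Finset.Icc (1 : ℤ) k, ((-1 : F) ^ (j - 1).toNat) • v j (k + 1 - j)

variable (F) in
def imageFlag (m n : ℕ) (v : ℤ → ℤ → V) (N : V →ₗ[F] V) (i : ℕ) : Submodule F V :=
  (antidiag F m n v (m + n - i)).map (N ^ (n - i))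

variable (F) in
def kernelFlag (m n : ℕ) (v : ℤ → ℤ → V) (N : V →ₗ[F] V) (j : ℕ) : Submodule F V :=
  antidiag F m n v m ⊓ LinearMap.ker (N ^ j)

variable {m n : ℕ} {v : ℤ → ℤ → V} {N : V →ₗ[F] V}

theorem antidiag_eq_bot {k : ℤ} (hk : k ≤ 0) :
    antidiag F m n v k = ⊥ := by
  rw [antidiag, span_eq_bot]
  rintro _ ⟨i, j, hi, -, hj, -, hij, -⟩
  omega

theorem kernelFlag_zero : kernelFlag F m n v N 0 = ⊥ := by
  rw [kernelFlag, pow_zero, Module.End.one_eq_id, LinearMap.ker_id, inf_bot_eq]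

namespace IsGridShift_s12

noncomputable def basis (h : IsGridShift_s12 m n v N) : Basis (Fin m × Fin n) F V :=
  Basis.mk h.linearIndependent h.span_eq_top.ge

theorem v_eq_basis (h : IsGridShift_s12 m n v N) {a b : ℤ} (ha : 1 ≤ a) (ha' : a ≤ m) (hb : 1 ≤ b)
    (hb' : b ≤ n) : v a b = h.basis (⟨(a - 1).toNat, by omega⟩, ⟨(b - 1).toNat, by omega⟩) := by
  rw [basis, Basis.mk_apply]
  dsimp only
  congr <;> omega

-- Extended by zero outside the box, so that `coord_N` holds without boundary cases.
noncomputable def coord (h : IsGridShift_s12 m n v N) (a b : ℤ) : V →ₗ[F] F :=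
  if hab : 1 ≤ a ∧ a ≤ m ∧ 1 ≤ b ∧ b ≤ n then
    h.basis.coord (⟨(a - 1).toNat, by omega⟩, ⟨(b - 1).toNat, by omega⟩)
  else 0

theorem coord_of_not_mem (h : IsGridShift_s12 m n v N) {a b : ℤ}
    (hab : a < 1 ∨ (m : ℤ) < a ∨ b < 1 ∨ (n : ℤ) < b) : h.coord a b = 0 :=
  dif_neg (by omega)

theorem coord_v (h : IsGridShift_s12 m n v N) (a b a' b' : ℤ) :
    h.coord a b (v a' b') = if a' = a ∧ b' = b ∧ 1 ≤ a ∧ a ≤ m ∧ 1 ≤ b ∧ b ≤ n then 1 else 0 := by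
  by_cases hin : 1 ≤ a' ∧ a' ≤ m ∧ 1 ≤ b' ∧ b' ≤ n
  · by_cases hab : 1 ≤ a ∧ a ≤ m ∧ 1 ≤ b ∧ b ≤ n
    · rw [coord, dif_pos hab, h.v_eq_basis hin.1 hin.2.1 hin.2.2.1 hin.2.2.2,
        Basis.coord_apply, Basis.repr_self, Finsupp.single_apply]
      refine if_congr ⟨fun he ↦ ?_, fun he ↦ ?_⟩ rfl rfl
      · simp only [Prod.mk.injEq, Fin.mk.injEq] at he
        omega
      · simp only [Prod.mk.injEq, Fin.mk.injEq]
        omega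
    · rw [h.coord_of_not_mem (by omega), LinearMap.zero_apply, if_neg (by omega)]
  · rw [h.eq_zero a' b' (by omega), map_zero, if_neg (by omega)]

theorem eq_zero_of_coord (h : IsGridShift_s12 m n v N) {z : V}
    (hz : ∀ a b : ℤ, 1 ≤ a → a ≤ m → 1 ≤ b → b ≤ n → h.coord a b z = 0) : z = 0 := by
  refine h.basis.forall_coord_eq_zero_iff.mp fun p ↦ ?_
  have := hz (p.1 + 1) (p.2 + 1) (by omega) (by omega) (by omega) (by omega)
  rw [coord, dif_pos (by omega)] at this
  convert this using 3; ext <;> simp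

theorem coord_N (h : IsGridShift_s12 m n v N) {a b : ℤ} (ha : 1 ≤ a) (ha' : a ≤ m) (hb : 1 ≤ b)
    (hb' : b ≤ n) (z : V) : h.coord a b (N z) = h.coord (a + 1) b z + h.coord a (b + 1) z := by
  suffices h.coord a b ∘ₗ N = h.coord (a + 1) b + h.coord a (b + 1) from
    LinearMap.congr_fun this z
  refine h.basis.ext fun p ↦ ?_
  rw [basis, Basis.mk_apply, LinearMap.comp_apply, h.apply_v _ _ (by omega) (by omega) (by omega)
    (by omega), LinearMap.add_apply, map_add, h.coord_v, h.coord_v, h.coord_v, h.coord_v]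
  split_ifs <;> first | (exfalso; omega) | simp

theorem v_mem_antidiag (h : IsGridShift_s12 m n v N) {i j k : ℤ} (hij : i + j = k + 1) :
    v i j ∈ antidiag F m n v k := by
  by_cases hin : 1 ≤ i ∧ i ≤ m ∧ 1 ≤ j ∧ j ≤ n
  · exact subset_span ⟨i, j, hin.1, hin.2.1, hin.2.2.1, hin.2.2.2, hij, rfl⟩
  · rw [h.eq_zero i j (by omega)]
    exact zero_mem _

theorem coord_eq_zero_of_mem_antidiag (h : IsGridShift_s12 m n v N) {a b k : ℤ} (hab : a + b ≠ k + 1)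
    {z : V} (hz : z ∈ antidiag F m n v k) : h.coord a b z = 0 := by
  induction hz using span_induction with
  | mem z hz =>
    obtain ⟨i, j, -, -, -, -, hij, rfl⟩ := hz
    rw [h.coord_v, if_neg (by omega)]
  | zero => exact map_zero _
  | add _ _ _ _ h₁ h₂ => rw [map_add, h₁, h₂, add_zero]
  | smul c _ _ h₁ => rw [map_smul, h₁, smul_zero]

theorem map_antidiag_le (h : IsGridShift_s12 m n v N) (k : ℤ) :
    (antidiag F m n v k).map N ≤ antidiag F m n v (k - 1) := by
  rw [antidiag, map_span_le]
  rintro _ ⟨i, j, hi, hi', hj, hj', hij, rfl⟩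
  rw [h.apply_v i j hi hi' hj hj']
  exact add_mem (h.v_mem_antidiag (by omega)) (h.v_mem_antidiag (by omega))

theorem map_pow_antidiag_le (h : IsGridShift_s12 m n v N) (t : ℕ) (k : ℤ) :
    (antidiag F m n v k).map (N ^ t) ≤ antidiag F m n v (k - t) := by
  induction t with
  | zero => rw [pow_zero, Module.End.one_eq_id, map_id, Nat.cast_zero, sub_zero]
  | succ t ih =>
    rw [pow_succ', Module.End.mul_eq_comp, map_comp]
    refine (map_mono ih).trans ?_
    convert h.map_antidiag_le (k - t) using 2
    push_cast
    ring

theorem eq_zero_of_mem_antidiag_of_apply_eq_zero (h : IsGridShift_s12 m n v N) {k : ℤ} (hk : m < k)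
    {z : V} (hz : z ∈ antidiag F m n v k) (hNz : N z = 0) : z = 0 := by
  have step (a : ℤ) (hnext : h.coord (a + 1) (k - a) z = 0) : h.coord a (k + 1 - a) z = 0 := by
    by_cases hin : 1 ≤ a ∧ a ≤ m ∧ k - a ≤ n
    · have := h.coord_N hin.1 hin.2.1 (by omega) hin.2.2 z
      rwa [hNz, map_zero, hnext, zero_add, show k - a + 1 = k + 1 - a by ring, eq_comm] at this
    · rw [h.coord_of_not_mem (by omega), LinearMap.zero_apply]
  have hdiag (a : ℤ) (ha : a ≤ m + 1) : h.coord a (k + 1 - a) z = 0 := by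
    induction a, ha using Int.leInductionDown with
    | base => rw [h.coord_of_not_mem (by omega), LinearMap.zero_apply]
    | pred a _ ih =>
      refine step (a - 1) ?_
      rwa [sub_add_cancel, show k - (a - 1) = k + 1 - a by ring]
  refine h.eq_zero_of_coord fun a b ha ha' hb hb' ↦ ?_
  by_cases hab : a + b = k + 1
  · obtain rfl : b = k + 1 - a := by omega
    exact hdiag a (by omega)
  · exact h.coord_eq_zero_of_mem_antidiag hab hz

theorem disjoint_antidiag_ker_pow (h : IsGridShift_s12 m n v N) {t : ℕ} {k : ℤ} (hk : m + t ≤ k) :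
    Disjoint (antidiag F m n v k) (LinearMap.ker (N ^ t)) := by
  induction t generalizing k with
  | zero => rw [pow_zero, Module.End.one_eq_id, LinearMap.ker_id]; exact disjoint_bot_right
  | succ t ih =>
    refine disjoint_def.mpr fun z hz hker ↦ ?_
    rw [LinearMap.mem_ker, pow_succ, Module.End.mul_apply] at hker
    have hNz : N z ∈ antidiag F m n v (k - 1) := h.map_antidiag_le k (mem_map_of_mem hz)
    exact h.eq_zero_of_mem_antidiag_of_apply_eq_zero (by omega) hz
      (disjoint_def.mp (ih (by omega)) _ hNz hker)

theorem finrank_antidiag (h : IsGridShift_s12 m n v N) (hmn : m ≤ n) {i : ℕ} (hi : i ≤ m) :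
    finrank F (antidiag F m n v (m + n - i)) = i := by
  have hspan : antidiag F m n v (m + n - i) =
      span F (Set.range fun t : Fin i ↦ v (m - i + 1 + t) (n - t)) := by
    rw [antidiag]
    congr 1
    ext z
    constructor
    · rintro ⟨a, b, ha, ha', hb, hb', hab, rfl⟩
      exact ⟨⟨(a - (m - i + 1)).toNat, by omega⟩, by dsimp only; congr <;> omega⟩
    · rintro ⟨t, rfl⟩
      exact ⟨_, _, by omega, by omega, by omega, by omega, by omega, rfl⟩
  have hli : LinearIndependent F fun t : Fin i ↦ v (m - i + 1 + t) (n - t) := by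
    have := h.linearIndependent.comp
      (fun t : Fin i ↦ ((⟨m - i + t, by omega⟩ : Fin m), (⟨n - 1 - t, by omega⟩ : Fin n)))
      fun s t hst ↦ by simp only [Prod.mk.injEq, Fin.mk.injEq] at hst; omega
    convert this using 2 with t
    dsimp only [Function.comp_apply]
    congr 1 <;> omega
  rw [hspan, finrank_span_eq_card hli, Fintype.card_fin]

theorem altDiag_mem_antidiag (h : IsGridShift_s12 m n v N) (k : ℤ) :
    altDiag F v k ∈ antidiag F m n v k :=
  sum_mem fun j _ ↦ smul_mem _ _ (h.v_mem_antidiag (by ring))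

theorem coord_altDiag (h : IsGridShift_s12 m n v N) {k a : ℤ} (ha : 1 ≤ a) (ha' : a ≤ m)
    (hak : a ≤ k) (hkn : k + 1 - a ≤ n) :
    h.coord a (k + 1 - a) (altDiag F v k) = (-1 : F) ^ (a - 1).toNat := by
  rw [altDiag, map_sum, Finset.sum_eq_single a]
  · rw [map_smul, h.coord_v, if_pos ⟨rfl, rfl, ha, ha', by omega, hkn⟩, smul_eq_mul, mul_one]
  · intro j _ hja
    rw [map_smul, h.coord_v, if_neg (by omega), smul_zero]
  · exact fun hnot ↦ absurd (Finset.mem_Icc.mpr ⟨ha, hak⟩) hnot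

theorem coord_eq_neg_one_pow_mul_of_apply_eq_zero (h : IsGridShift_s12 m n v N) (hmn : m ≤ n) {k : ℤ}
    (hk : k ≤ m) {z : V} (hNz : N z = 0) {a : ℤ} (ha : 1 ≤ a) (hak : a ≤ k) :
    h.coord a (k + 1 - a) z = (-1 : F) ^ (a - 1).toNat * h.coord 1 k z := by
  induction a, ha using Int.leInduction with
  | base => simp
  | succ a ha ih =>
    have hsum := h.coord_N (b := k - a) ha (by omega) (by omega) (by omega) z
    rw [hNz, map_zero, show k - a + 1 = k + 1 - a by ring, ih (by omega)] at hsum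
    rw [show k + 1 - (a + 1) = k - a by ring, show (a + 1 - 1).toNat = (a - 1).toNat + 1 by omega,
      pow_succ]
    linear_combination -hsum

theorem ker_inf_antidiag_le (h : IsGridShift_s12 m n v N) (hmn : m ≤ n) {k : ℤ} (hk : k ≤ m) :
    LinearMap.ker N ⊓ antidiag F m n v k ≤ F ∙ altDiag F v k := by
  rintro z ⟨hNz, hz⟩
  refine mem_span_singleton.mpr ⟨h.coord 1 k z, (sub_eq_zero.mp ?_).symm⟩
  refine h.eq_zero_of_coord fun a b ha ha' hb hb' ↦ ?_
  rw [map_sub, map_smul, smul_eq_mul, sub_eq_zero]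
  by_cases hab : a + b = k + 1
  · obtain rfl : b = k + 1 - a := by omega
    rw [h.coord_eq_neg_one_pow_mul_of_apply_eq_zero hmn hk hNz ha (by omega),
      h.coord_altDiag ha ha' (by omega) hb', mul_comm]
  · rw [h.coord_eq_zero_of_mem_antidiag hab hz,
      h.coord_eq_zero_of_mem_antidiag hab (h.altDiag_mem_antidiag k), mul_zero]

theorem finrank_imageFlag (h : IsGridShift_s12 m n v N) (hmn : m ≤ n) {i : ℕ} (hi : i ≤ m) :
    finrank F (imageFlag F m n v N i) = i := by
  rw [imageFlag, finrank_map_eq_of_disjoint_ker (h.disjoint_antidiag_ker_pow (by omega)),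
    h.finrank_antidiag hmn hi]

theorem imageFlag_lt (h : IsGridShift_s12 m n v N) (hmn : m ≤ n) {i : ℕ} (hi : i < m) :
    imageFlag F m n v N i < imageFlag F m n v N (i + 1) := by
  refine lt_of_le_of_finrank_lt_finrank ?_ (by
    rw [h.finrank_imageFlag hmn hi.le, h.finrank_imageFlag hmn hi]; omega)
  rw [imageFlag, imageFlag, show n - i = n - (i + 1) + 1 by omega, pow_succ,
    Module.End.mul_eq_comp, map_comp]
  refine map_mono ((h.map_antidiag_le _).trans_eq ?_)
  congr 1
  push_cast
  ring

theorem imageFlag_le_kernelFlag (h : IsGridShift_s12 m n v N) (hmn : m ≤ n) :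
    imageFlag F m n v N m ≤ kernelFlag F m n v N m := by
  rintro _ ⟨z, hz, rfl⟩
  have hw : (N ^ (n - m)) z ∈ antidiag F m n v m := by
    convert h.map_pow_antidiag_le (n - m) _ (mem_map_of_mem hz) using 2
    omega
  have hNw := h.map_pow_antidiag_le m m (mem_map_of_mem hw)
  rw [sub_self, antidiag_eq_bot le_rfl, mem_bot] at hNw
  exact ⟨hw, hNw⟩

theorem kernelFlag_wcovBy (h : IsGridShift_s12 m n v N) (hmn : m ≤ n) (j : ℕ) :
    kernelFlag F m n v N j ⩿ kernelFlag F m n v N (j + 1) := by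
  have hker : LinearMap.ker (N ^ j) ≤ LinearMap.ker (N ^ (j + 1)) := by
    rw [pow_succ', Module.End.mul_eq_comp]
    exact LinearMap.ker_le_ker_comp _ _
  have : kernelFlag F m n v N j = kernelFlag F m n v N (j + 1) ⊓ LinearMap.ker (N ^ j) := by
    rw [kernelFlag, kernelFlag, inf_assoc, inf_eq_right.mpr hker]
  rw [this]
  refine inf_ker_wcovBy_of_map_le_span (y := altDiag F v (m - j)) ?_
  rintro _ ⟨w, ⟨hwD, hwK⟩, rfl⟩
  refine h.ker_inf_antidiag_le hmn (by omega) ⟨?_, h.map_pow_antidiag_le j m (mem_map_of_mem hwD)⟩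
  refine LinearMap.mem_ker.mpr ?_
  rw [← Module.End.mul_apply, ← pow_succ']
  exact LinearMap.mem_ker.mp hwK

theorem exists_pow_eq_smul_altDiag (h : IsGridShift_s12 m n v N) (hmn : m ≤ n) {t : ℕ}
    {w : V} (hw : w ∈ kernelFlag F m n v N (t + 1)) (hw' : w ∉ kernelFlag F m n v N t) :
    ∃ c : F, c ≠ 0 ∧ (N ^ t) w = c • altDiag F v (m - t) := by
  have hmem : (N ^ t) w ∈ LinearMap.ker N ⊓ antidiag F m n v (m - t) :=
    ⟨LinearMap.mem_ker.mpr (by rw [← Module.End.mul_apply, ← pow_succ']; exact hw.2),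
      h.map_pow_antidiag_le t m (mem_map_of_mem hw.1)⟩
  obtain ⟨c, hc⟩ := mem_span_singleton.mp (h.ker_inf_antidiag_le hmn (by omega) hmem)
  refine ⟨c, ?_, hc.symm⟩
  rintro rfl
  rw [zero_smul] at hc
  exact hw' ⟨hw.1, hc.symm⟩

end IsGridShift_s12

end Grid

theorem stmt_12_general (F : Type*) [Field F] (m n : ℕ) (hmn : m ≤ n)
    (V : Type*) [AddCommGroup V] [Module F V]
    (v : ℤ → ℤ → V)
    (hv_indep : LinearIndependent F
      (fun p : Fin m × Fin n => v (((p.1 : ℕ) + 1 : ℕ) : ℤ) (((p.2 : ℕ) + 1 : ℕ) : ℤ)))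
    (hv_span : Submodule.span F
      (Set.range (fun p : Fin m × Fin n =>
        v (((p.1 : ℕ) + 1 : ℕ) : ℤ) (((p.2 : ℕ) + 1 : ℕ) : ℤ))) = ⊤)
    (hv0 : ∀ i j : ℤ, (i < 1 ∨ (m : ℤ) < i ∨ j < 1 ∨ (n : ℤ) < j) → v i j = 0)
    (N : V →ₗ[F] V)
    (hN : ∀ i j : ℤ, 1 ≤ i → i ≤ (m : ℤ) → 1 ≤ j → j ≤ (n : ℤ) →
      N (v i j) = v (i - 1) j + v i (j - 1))
    (D : ℤ → Submodule F V)
    (hD : ∀ k : ℤ, D k = Submodule.span F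
      {z | ∃ i j : ℤ, 1 ≤ i ∧ i ≤ (m : ℤ) ∧ 1 ≤ j ∧ j ≤ (n : ℤ) ∧ i + j = k + 1 ∧ z = v i j})
    (x : ℤ → V)
    (hx : ∀ i : ℤ, x i =
      ∑ j ∈ Finset.Icc (1 : ℤ) i, ((-1 : F) ^ (j - 1).toNat) • v j (i + 1 - j)) :
    ∃ (π : Equiv.Perm (Fin m)) (z : Fin m → V),
      ∀ i : Fin m,
        z i ∈ D ((m : ℤ) + n - ((i : ℕ) + 1)) ∧
        Submodule.span F {(N ^ (m + n - ((i : ℕ) + 1) - ((π i : ℕ) + 1))) (z i)} =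
          Submodule.span F {x (((π i : ℕ) + 1 : ℕ) : ℤ)} ∧
        ∃ c : F, c ≠ 0 ∧
          (N ^ (m + n - ((i : ℕ) + 1) - ((π i : ℕ) + 1))) (z i) =
            c • x (((π i : ℕ) + 1 : ℕ) : ℤ) := by
  have h : IsGridShift_s12 m n v N := ⟨hv_indep, hv_span, hv0, hN⟩
  obtain rfl : D = antidiag F m n v := funext hD
  obtain rfl : x = altDiag F v := funext hx
  obtain ⟨σ, hσ⟩ := exists_perm_flag_position (W := imageFlag F m n v N)
    (G := kernelFlag F m n v N) (fun i hi ↦ h.imageFlag_lt hmn hi)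
    (fun j _ ↦ h.kernelFlag_wcovBy hmn j) kernelFlag_zero (h.imageFlag_le_kernelFlag hmn)
  have key (i : Fin m) : ∃ z ∈ antidiag F m n v (m + n - ((i : ℕ) + 1)), ∃ c : F, c ≠ 0 ∧
      (N ^ (m + n - ((i : ℕ) + 1) - ((Fin.revPerm (σ i) : ℕ) + 1))) z =
        c • altDiag F v (((Fin.revPerm (σ i) : ℕ) + 1 : ℕ) : ℤ) := by
    obtain ⟨w, ⟨hwW, hwG⟩, hwW'⟩ := SetLike.not_le_iff_exists.mp (hσ i).1
    obtain ⟨z, hz, rfl⟩ := hwW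
    obtain ⟨c, hc, hzc⟩ := h.exists_pow_eq_smul_altDiag hmn hwG
      fun hw ↦ hwW' ((hσ i).2 ⟨mem_map_of_mem hz, hw⟩)
    refine ⟨z, ?_, c, hc, ?_⟩
    · convert SetLike.mem_coe.mp hz using 2
      push_cast
      ring
    · rw [Fin.revPerm_apply, Fin.val_rev, show m + n - ((i : ℕ) + 1) - (m - ((σ i : ℕ) + 1) + 1) =
        (σ i : ℕ) + (n - ((i : ℕ) + 1)) by omega, pow_add, Module.End.mul_apply, hzc]
      congr 2
      omega
  choose z hz c hc hzc using key
  refine ⟨σ.trans Fin.revPerm, z, fun i ↦ ⟨hz i, ?_, c i, hc i, hzc i⟩⟩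
  rw [Equiv.trans_apply, hzc i, span_singleton_smul_eq (IsUnit.mk0 _ (hc i))]

/-- There exist a permutation π of {1,…,m} and z_i ∈ D_{m+n−i} such that
span(N^{m+n−i−π(i)}(z_i)) = span(x_{π(i)}); in particular N^{m+n−i−π(i)}(z_i) is a nonzero
scalar multiple of x_{π(i)}. -/
theorem stmt_12 (F : Type*) [Field F] (m n : ℕ) (hm : 0 < m) (hmn : m ≤ n)
    (V : Type*) [AddCommGroup V] [Module F V]
    (v : ℤ → ℤ → V)
    (hv_indep : LinearIndependent F
      (fun p : Fin m × Fin n => v (((p.1 : ℕ) + 1 : ℕ) : ℤ) (((p.2 : ℕ) + 1 : ℕ) : ℤ)))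
    (hv_span : Submodule.span F
      (Set.range (fun p : Fin m × Fin n =>
        v (((p.1 : ℕ) + 1 : ℕ) : ℤ) (((p.2 : ℕ) + 1 : ℕ) : ℤ))) = ⊤)
    (hv0 : ∀ i j : ℤ, (i < 1 ∨ (m : ℤ) < i ∨ j < 1 ∨ (n : ℤ) < j) → v i j = 0)
    (N : V →ₗ[F] V)
    (hN : ∀ i j : ℤ, 1 ≤ i → i ≤ (m : ℤ) → 1 ≤ j → j ≤ (n : ℤ) →
      N (v i j) = v (i - 1) j + v i (j - 1))
    (D : ℤ → Submodule F V)
    (hD : ∀ k : ℤ, D k = Submodule.span F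
      {z | ∃ i j : ℤ, 1 ≤ i ∧ i ≤ (m : ℤ) ∧ 1 ≤ j ∧ j ≤ (n : ℤ) ∧ i + j = k + 1 ∧ z = v i j})
    (x : ℤ → V)
    (hx : ∀ i : ℤ, x i =
      ∑ j ∈ Finset.Icc (1 : ℤ) i, ((-1 : F) ^ (j - 1).toNat) • v j (i + 1 - j)) :
    ∃ (π : Equiv.Perm (Fin m)) (z : Fin m → V),
      ∀ i : Fin m,
        z i ∈ D ((m : ℤ) + n - ((i : ℕ) + 1)) ∧
        Submodule.span F {(N ^ (m + n - ((i : ℕ) + 1) - ((π i : ℕ) + 1))) (z i)} =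
          Submodule.span F {x (((π i : ℕ) + 1 : ℕ) : ℤ)} ∧
        ∃ c : F, c ≠ 0 ∧
          (N ^ (m + n - ((i : ℕ) + 1) - ((π i : ℕ) + 1))) (z i) =
            c • x (((π i : ℕ) + 1 : ℕ) : ℤ) :=
  stmt_12_general F m n hmn V v hv_indep hv_span hv0 N hN D hD x hx
end

section
/- Let a and b be positive integers with a+1 < b ≤ m. Let T : D_{m+n−a−1} → D_{m+n−b} be the restriction of N^{b−a−1} (which maps D_{m+n−a−1} into D_{m+n−b}), and define the linear map U : D_{m+n−b} → D_{m+n−a−1} by U(∑_{j=m−b+1}^{m} α_j v_{j,m+n−b+1−j}) = ∑_{k=m−a}^{m} ( ∑_{t=k}^{m} (−1)^{t−k} C(t−k+b−a−2, b−a−2) α_t ) v_{k,m+n−a−k}. Then U ∘ T is the identity map on D_{m+n−a−1}, and T(U(z)) = z for every z in the image of T. -/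
open Finset PowerSeries

theorem Module.End.pow_apply_eq_sum_choose_nsmul {R M : Type*} [Semiring R] [AddCommMonoid M]
    [Module R M] (N : Module.End R M) (g : ℕ → ℕ → M)
    (hg : ∀ s t, N (g s t) = g (s + 1) t + g s (t + 1)) (P : ℕ) :
    (N ^ P) (g 0 0) = ∑ s ∈ range (P + 1), P.choose s • g s (P - s) := by
  induction P with
  | zero => simp
  | succ P ih =>
    rw [pow_succ', Module.End.mul_apply, ih, map_sum, sum_choose_succ_nsmul, ← sum_add_distrib]
    refine sum_congr rfl fun s hs => ?_
    have hs : s ≤ P := Nat.lt_succ_iff.1 (mem_range.1 hs)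
    rw [map_nsmul, hg, smul_add, add_comm, Nat.sub_add_comm hs]

theorem sum_antidiagonal_choose_mul_neg_one_pow_mul_choose (R : Type*) [CommRing R] (q e : ℕ) :
    ∑ ij ∈ antidiagonal e, ((q + 1).choose ij.1 : R) * ((-1) ^ ij.2 * (q + ij.2).choose q) =
      if e = 0 then 1 else 0 := by
  have hX : (((1 + Polynomial.X) ^ (q + 1) : Polynomial R) : R⟦X⟧) =
      rescale (-1) ((1 - X) ^ (q + 1)) := by
    simp [map_pow, sub_eq_add_neg]
  have key : (((1 + Polynomial.X) ^ (q + 1) : Polynomial R) : R⟦X⟧) *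
      rescale (-1) (mk fun n => ((q + n).choose q : R)) = 1 := by
    rw [hX, ← map_mul, mul_comm, mk_add_choose_mul_one_sub_pow_eq_one, map_one]
  have h := congrArg (coeff e) key
  rw [coeff_mul, coeff_one] at h
  simpa only [Polynomial.coeff_coe, Polynomial.coeff_one_add_X_pow, coeff_rescale, coeff_mk]
    using h

/-- For `e ≥ 0`, the `e`-th coefficient `(-1)^e C(e+q, q)` of `(1 + X)^{-(q+1)}`. -/
def negBinomCoeff (R : Type*) [Ring R] (q : ℕ) (e : ℤ) : R :=
  if 0 ≤ e then (-1) ^ e.toNat * ((q + e.toNat).choose q : R) else 0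

theorem sum_range_choose_mul_negBinomCoeff (R : Type*) [CommRing R] (q : ℕ) (d : ℤ) :
    ∑ s ∈ range (q + 2), ((q + 1).choose s : R) * negBinomCoeff R q (d - s) =
      if d = 0 then 1 else 0 := by
  rcases lt_or_ge d 0 with hd | hd
  · rw [if_neg hd.ne]
    exact sum_eq_zero fun s _ => by rw [negBinomCoeff, if_neg (by omega), mul_zero]
  lift d to ℕ using hd
  calc ∑ s ∈ range (q + 2), ((q + 1).choose s : R) * negBinomCoeff R q (d - s)
      = ∑ s ∈ range (q + d + 2), ((q + 1).choose s : R) * negBinomCoeff R q (d - s) :=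
        sum_subset (range_subset_range.2 (by omega)) fun s _ hs => by
          rw [Nat.choose_eq_zero_of_lt (by simp at hs; omega), Nat.cast_zero, zero_mul]
    _ = ∑ s ∈ range (d + 1), ((q + 1).choose s : R) * negBinomCoeff R q (d - s) :=
        (sum_subset (range_subset_range.2 (by omega)) fun s _ hs => by
          rw [negBinomCoeff, if_neg (by simp at hs; omega), mul_zero]).symm
    _ = ∑ ij ∈ antidiagonal d,
          ((q + 1).choose ij.1 : R) * ((-1) ^ ij.2 * (q + ij.2).choose q) := by
        rw [Nat.sum_antidiagonal_eq_sum_range_succ_mk]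
        refine sum_congr rfl fun s hs => ?_
        have hs : s ≤ d := Nat.lt_succ_iff.1 (mem_range.1 hs)
        rw [negBinomCoeff, if_pos (by omega), show ((d : ℤ) - s).toNat = d - s by omega]
    _ = if (d : ℤ) = 0 then 1 else 0 := by
        rw [sum_antidiagonal_choose_mul_neg_one_pow_mul_choose]
        simp

theorem ite_neg_one_pow_mul_icho_eq_negBinomCoeff (R : Type*) [Ring R] {a b : ℕ}
    (hab : a + 1 < b) (j k : ℤ) :
    (if k ≤ j then (-1 : R) ^ (j - k).toNat * (icho (j - k + b - a - 2) (b - a - 2) : R)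
      else 0) = negBinomCoeff R (b - a - 2) (j - k) := by
  rw [negBinomCoeff]
  split_ifs with hkj hkj'
  · rw [icho, if_pos ⟨by omega, by omega⟩,
      show (j - k + b - a - 2).toNat = b - a - 2 + (j - k).toNat by omega,
      show ((b : ℤ) - a - 2).toNat = b - a - 2 by omega]
    push_cast
    rfl
  · omega
  · omega
  · rfl

theorem apply_pow_apply_eq_self_of_apply_eq_sum_negBinomCoeff {R V : Type*} [CommRing R]
    [AddCommGroup V] [Module R V]
    {m n a b : ℕ} (hab : a + 1 < b) {v : ℤ → ℤ → V} {N U : Module.End R V}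
    (hN : ∀ i j : ℤ, i ≤ m → j ≤ n → N (v i j) = v (i - 1) j + v i (j - 1))
    (hU : ∀ j : ℤ, (m : ℤ) - b + 1 ≤ j → j ≤ m → U (v j (m + n - b + 1 - j)) =
      ∑ k ∈ Icc ((m : ℤ) - a) m, negBinomCoeff R (b - a - 2) (j - k) • v k (m + n - a - k))
    {k : ℤ} (hk : k ∈ Icc ((m : ℤ) - a) m) :
    U ((N ^ (b - a - 1)) (v k (m + n - a - k))) = v k (m + n - a - k) := by
  obtain ⟨q, rfl⟩ : ∃ q, b = a + q + 2 := ⟨b - a - 2, by omega⟩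
  rw [mem_Icc] at hk
  rw [show a + q + 2 - a - 2 = q by omega] at hU
  have expand := Module.End.pow_apply_eq_sum_choose_nsmul N
    (fun s t => v (k - s) (m + n - a - k - t))
    (fun s t => by rw [hN _ _ (by omega) (by omega)]; push_cast; ring_nf) (q + 1)
  simp only [Nat.cast_zero, sub_zero] at expand
  rw [show a + q + 2 - a - 1 = q + 1 by omega, expand, map_sum]
  calc ∑ s ∈ range (q + 1 + 1),
        U ((q + 1).choose s • v (k - s) (m + n - a - k - ↑(q + 1 - s)))
      = ∑ s ∈ range (q + 2), ∑ k' ∈ Icc ((m : ℤ) - a) m,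
          (((q + 1).choose s : R) * negBinomCoeff R q (k - k' - s)) • v k' (m + n - a - k') := by
        refine sum_congr rfl fun s hs => ?_
        have hs : s ≤ q + 1 := Nat.lt_succ_iff.1 (mem_range.1 hs)
        rw [map_nsmul,
          show (m + n - a - k - ↑(q + 1 - s) : ℤ) = m + n - ↑(a + q + 2) + 1 - (k - s) by
            omega,
          hU _ (by push_cast; omega) (by omega), smul_sum]
        refine sum_congr rfl fun k' _ => ?_
        rw [← Nat.cast_smul_eq_nsmul R, smul_smul, sub_right_comm]
    _ = ∑ k' ∈ Icc ((m : ℤ) - a) m,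
          (if k - k' = 0 then 1 else 0 : R) • v k' (m + n - a - k') := by
        rw [sum_comm]
        refine sum_congr rfl fun k' _ => ?_
        rw [← sum_smul, sum_range_choose_mul_negBinomCoeff]
    _ = v k (m + n - a - k) := by
        simp [sub_eq_zero, eq_comm (a := k), hk.1, hk.2]

theorem stmt_15_general (F : Type*) [Field F] (m n : ℕ)
    (V : Type*) [AddCommGroup V] [Module F V]
    (v : ℤ → ℤ → V)
    (hv0 : ∀ i j : ℤ, (i < 1 ∨ (m : ℤ) < i ∨ j < 1 ∨ (n : ℤ) < j) → v i j = 0)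
    (N : V →ₗ[F] V)
    (hN : ∀ i j : ℤ, 1 ≤ i → i ≤ (m : ℤ) → 1 ≤ j → j ≤ (n : ℤ) →
      N (v i j) = v (i - 1) j + v i (j - 1))
    (D : ℤ → Submodule F V)
    (hD : ∀ k : ℤ, D k = Submodule.span F
      {z | ∃ i j : ℤ, 1 ≤ i ∧ i ≤ (m : ℤ) ∧ 1 ≤ j ∧ j ≤ (n : ℤ) ∧ i + j = k + 1 ∧ z = v i j})
    (a b : ℕ) (hab : a + 1 < b)
    (U : V →ₗ[F] V)
    (hU : ∀ j : ℤ, (m : ℤ) - b + 1 ≤ j → j ≤ (m : ℤ) →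
      U (v j ((m : ℤ) + n - b + 1 - j)) =
        ∑ k ∈ Finset.Icc ((m : ℤ) - a) (m : ℤ),
          (if k ≤ j then
              ((-1 : F) ^ (j - k).toNat *
                (icho (j - k + (b : ℤ) - a - 2) ((b : ℤ) - a - 2) : F))
            else 0) • v k ((m : ℤ) + n - a - k)) :
    (∀ y ∈ D ((m : ℤ) + n - a - 1), U ((N ^ (b - a - 1)) y) = y) ∧
      (∀ z ∈ D ((m : ℤ) + n - b),
        (∃ y ∈ D ((m : ℤ) + n - a - 1), (N ^ (b - a - 1)) y = z) →
          (N ^ (b - a - 1)) (U z) = z) := by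
  have hN' : ∀ i j : ℤ, i ≤ m → j ≤ n → N (v i j) = v (i - 1) j + v i (j - 1) := by
    intro i j hi hj
    by_cases h : 1 ≤ i ∧ 1 ≤ j
    · exact hN i j h.1 hi h.2 hj
    · rw [hv0 i j (by omega), hv0 (i - 1) j (by omega), hv0 i (j - 1) (by omega), map_zero,
        add_zero]
  have hU' : ∀ j : ℤ, (m : ℤ) - b + 1 ≤ j → j ≤ m → U (v j (m + n - b + 1 - j)) =
      ∑ k ∈ Icc ((m : ℤ) - a) m,
        negBinomCoeff F (b - a - 2) (j - k) • v k (m + n - a - k) := by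
    intro j hj₁ hj₂
    simp only [hU j hj₁ hj₂, ite_neg_one_pow_mul_icho_eq_negBinomCoeff F hab]
  have left_inv : ∀ y ∈ D ((m : ℤ) + n - a - 1), U ((N ^ (b - a - 1)) y) = y := by
    intro y hy
    rw [hD] at hy
    refine LinearMap.eqOn_span (f := U ∘ₗ N ^ (b - a - 1)) (g := LinearMap.id) ?_ hy
    rintro _ ⟨i, j, -, hi, -, hj, hij, rfl⟩
    obtain rfl : j = m + n - a - i := by omega
    exact apply_pow_apply_eq_self_of_apply_eq_sum_negBinomCoeff hab hN' hU'
      (mem_Icc.2 ⟨by omega, hi⟩)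
  exact ⟨left_inv, fun z _ ⟨y, hy, hyz⟩ => hyz ▸ congrArg _ (left_inv y hy)⟩

/-- For positive integers a, b with a+1 < b ≤ m, let T be the restriction
of N^{b−a−1} to D_{m+n−a−1} (which maps into D_{m+n−b}) and let U : D_{m+n−b} → D_{m+n−a−1}
be the linear map with
U(∑ α_j v_{j,m+n−b+1−j}) = ∑_k (∑_t (−1)^{t−k} C(t−k+b−a−2,b−a−2) α_t) v_{k,m+n−a−k}.
Then U ∘ T = id on D_{m+n−a−1} and T(U(z)) = z for all z in the image of T. -/
theorem stmt_15 (F : Type*) [Field F] (m n : ℕ) (hm : 0 < m) (hmn : m ≤ n)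
    (V : Type*) [AddCommGroup V] [Module F V]
    (v : ℤ → ℤ → V)
    (hv_indep : LinearIndependent F
      (fun p : Fin m × Fin n => v (((p.1 : ℕ) + 1 : ℕ) : ℤ) (((p.2 : ℕ) + 1 : ℕ) : ℤ)))
    (hv_span : Submodule.span F
      (Set.range (fun p : Fin m × Fin n =>
        v (((p.1 : ℕ) + 1 : ℕ) : ℤ) (((p.2 : ℕ) + 1 : ℕ) : ℤ))) = ⊤)
    (hv0 : ∀ i j : ℤ, (i < 1 ∨ (m : ℤ) < i ∨ j < 1 ∨ (n : ℤ) < j) → v i j = 0)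
    (N : V →ₗ[F] V)
    (hN : ∀ i j : ℤ, 1 ≤ i → i ≤ (m : ℤ) → 1 ≤ j → j ≤ (n : ℤ) →
      N (v i j) = v (i - 1) j + v i (j - 1))
    (D : ℤ → Submodule F V)
    (hD : ∀ k : ℤ, D k = Submodule.span F
      {z | ∃ i j : ℤ, 1 ≤ i ∧ i ≤ (m : ℤ) ∧ 1 ≤ j ∧ j ≤ (n : ℤ) ∧ i + j = k + 1 ∧ z = v i j})
    (a b : ℕ) (ha : 0 < a) (hab : a + 1 < b) (hbm : b ≤ m)
    (hT : ∀ z ∈ D ((m : ℤ) + n - a - 1), (N ^ (b - a - 1)) z ∈ D ((m : ℤ) + n - b))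
    (U : V →ₗ[F] V)
    (hU : ∀ j : ℤ, (m : ℤ) - b + 1 ≤ j → j ≤ (m : ℤ) →
      U (v j ((m : ℤ) + n - b + 1 - j)) =
        ∑ k ∈ Finset.Icc ((m : ℤ) - a) (m : ℤ),
          (if k ≤ j then
              ((-1 : F) ^ (j - k).toNat *
                (icho (j - k + (b : ℤ) - a - 2) ((b : ℤ) - a - 2) : F))
            else 0) • v k ((m : ℤ) + n - a - k)) :
    (∀ y ∈ D ((m : ℤ) + n - a - 1), U ((N ^ (b - a - 1)) y) = y) ∧
      (∀ z ∈ D ((m : ℤ) + n - b),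
        (∃ y ∈ D ((m : ℤ) + n - a - 1), (N ^ (b - a - 1)) y = z) →
          (N ^ (b - a - 1)) (U z) = z) :=
  stmt_15_general F m n V v hv0 N hN D hD a b hab U hU
end

section
/- Let σ be a permutation of {1,…,m}, and suppose that for each i ∈ {1,…,m} an element y_i ∈ D_{m+n−i} satisfies N^{m+n−i−σ(i)}(y_i) = x_{σ(i)}. Then for each i the subspace Y_i spanned by {N^k(y_i) : 0 ≤ k ≤ m+n−i−σ(i)} is N-invariant, has dimension m+n−i−σ(i)+1 over F, N^{m+n−i−σ(i)+1}(y_i) = 0, and V = Y_1 ⊕ ⋯ ⊕ Y_m as an internal direct sum. -/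
/-!
If `N^(ℓ+1) y = 0`, the vectors `y, N y, …, N^ℓ y` form a Jordan chain, and chains whose top
vectors `N^ℓ y` are linearly independent are jointly linearly independent. Here the tops are the
`x_σ(i)`: each `N x_k` telescopes to `0`, and the `x_k` are independent because `x_k` is the only
one with a nonzero `v_{1,k}`-coordinate. As `σ` is a permutation, the chain lengths
`m + n + 1 - i - σ(i)` add up to `m (m + n + 1) - m (m + 1) = m n = dim V`, so the chains form a
basis of `V` adapted to the `Y_i`.
-/

open Module Submodule

namespace Module.End

variable {R M ι : Type*} [Ring R] [AddCommGroup M] [Module R M]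

theorem linearIndependent_sigma_pow_apply (N : Module.End R M) (ℓ : ι → ℕ) (y : ι → M)
    (hnil : ∀ i, (N ^ (ℓ i + 1)) (y i) = 0)
    (htop : LinearIndependent R fun i ↦ (N ^ ℓ i) (y i)) :
    LinearIndependent R fun q : Σ i, Fin (ℓ i + 1) ↦ (N ^ (q.2 : ℕ)) (y q.1) := by
  classical
  rw [linearIndependent_iff']
  intro s g hg
  by_contra! ⟨p₀, hp₀s, hp₀⟩
  obtain ⟨p, hp, hmax⟩ := (s.filter (g · ≠ 0)).exists_max_image (fun q ↦ ℓ q.1 - q.2)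
    ⟨p₀, Finset.mem_filter.2 ⟨hp₀s, hp₀⟩⟩
  rw [Finset.mem_filter] at hp
  -- `P` is the largest height of a nonzero coefficient, so `N ^ P` maps each term of the
  -- relation either to `0` or to a multiple of the top of its chain.
  set P := ℓ p.1 - p.2
  have hterm : ∀ q ∈ s, (N ^ P) (g q • (N ^ (q.2 : ℕ)) (y q.1)) =
      (if q.2 + P = ℓ q.1 then g q else 0) • (N ^ ℓ q.1) (y q.1) := by
    intro q hq
    rw [map_smul, ← Module.End.mul_apply, ← pow_add, add_comm]
    split_ifs with h
    · rw [h]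
    · rw [zero_smul]
      rcases lt_or_gt_of_ne h with h | h
      · have : g q = 0 := by
          by_contra hgq
          have := hmax q (Finset.mem_filter.2 ⟨hq, hgq⟩)
          omega
        rw [this, zero_smul]
      · rw [pow_map_zero_of_le h (hnil _), smul_zero]
  have hrel : ∑ i ∈ s.image Sigma.fst,
      (∑ q ∈ s with q.1 = i, if q.2 + P = ℓ q.1 then g q else 0) • (N ^ ℓ i) (y i) = 0 := by
    have := congrArg (N ^ P) hg
    rw [map_sum, map_zero, Finset.sum_congr rfl hterm,
      ← Finset.sum_fiberwise_of_maps_to (g := Sigma.fst) fun q hq ↦ Finset.mem_image_of_mem _ hq]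
      at this
    rw [← this]
    refine Finset.sum_congr rfl fun i _ ↦ ?_
    rw [Finset.sum_smul]
    exact Finset.sum_congr rfl fun q hq ↦ by obtain ⟨-, rfl⟩ := Finset.mem_filter.1 hq; rfl
  have := linearIndependent_iff'.1 htop _ _ hrel p.1 (Finset.mem_image_of_mem _ hp.1)
  rw [Finset.sum_eq_single_of_mem p (by simp [hp.1]), if_pos (by omega)] at this
  · exact hp.2 this
  · rintro ⟨i, k⟩ hq hne
    obtain ⟨-, rfl : i = p.1⟩ := Finset.mem_filter.1 hq
    rw [if_neg]
    intro h
    exact hne (Sigma.ext rfl (heq_of_eq (Fin.ext (by simp only at h ⊢; omega))))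

theorem apply_mem_span_range_pow_apply {N : Module.End R M} {ℓ : ℕ} {y : M}
    (hnil : (N ^ (ℓ + 1)) y = 0) {z : M}
    (hz : z ∈ span R (Set.range fun k : Fin (ℓ + 1) ↦ (N ^ (k : ℕ)) y)) :
    N z ∈ span R (Set.range fun k : Fin (ℓ + 1) ↦ (N ^ (k : ℕ)) y) := by
  refine (map_span_le N _ _).2 ?_ (mem_map_of_mem hz)
  rintro _ ⟨k, rfl⟩
  rw [← Module.End.mul_apply, ← pow_succ']
  rcases (Nat.lt_succ_iff.1 k.isLt).eq_or_lt with hk | hk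
  · rw [hk, hnil]
    exact zero_mem _
  · exact subset_span ⟨⟨k + 1, by omega⟩, rfl⟩

end Module.End

theorem DirectSum.isInternal_span_of_linearIndependent_sigma {R M ι : Type*} [Ring R]
    [AddCommGroup M] [Module R M] [DecidableEq ι] {κ : ι → Type*} {b : (Σ i, κ i) → M}
    (hli : LinearIndependent R b) (hspan : span R (Set.range b) = ⊤) :
    DirectSum.IsInternal fun i ↦ span R (Set.range fun k ↦ b ⟨i, k⟩) := by
  have hfiber (i : ι) : Set.range (fun k ↦ b ⟨i, k⟩) = b '' (Sigma.fst ⁻¹' {i}) := by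
    rw [← Set.range_sigmaMk, ← Set.range_comp]
    rfl
  refine DirectSum.isInternal_submodule_of_iSupIndep_of_iSup_eq_top (fun i ↦ ?_) ?_
  · rw [hfiber]
    refine (hli.disjoint_span_image (t := Sigma.fst ⁻¹' {i}ᶜ)
      (Set.disjoint_left.2 fun q hq hq' ↦ hq' hq)).mono_right ?_
    refine iSup₂_le fun j hji ↦ ?_
    rw [hfiber]
    exact span_mono (Set.image_mono fun q (hq : q.1 = j) ↦ show q.1 ≠ i from hq ▸ hji)
  · rw [eq_top_iff, ← hspan, span_le]
    rintro _ ⟨q, rfl⟩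
    exact mem_iSup_of_mem q.1 (subset_span ⟨q.2, rfl⟩)

theorem Equiv.Perm.sum_add_sub_sub_add_one {m : ℕ} (n : ℕ) (σ : Equiv.Perm (Fin m)) (hmn : m ≤ n) :
    ∑ i : Fin m, (m + n - ((i : ℕ) + 1) - ((σ i : ℕ) + 1) + 1) = m * n := by
  set A := fun i : Fin m ↦ m + n - ((i : ℕ) + 1) - ((σ i : ℕ) + 1) + 1
  have hA : ∀ i, A i + ((i : ℕ) + (σ i : ℕ)) = n + (m - 1) := fun i ↦ by
    have := i.isLt; have := (σ i).isLt; simp only [A]; omega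
  have hsum := Finset.sum_congr rfl fun i (_ : i ∈ Finset.univ) ↦ hA i
  rw [Finset.sum_add_distrib (f := A),
    Finset.sum_add_distrib (f := fun i : Fin m ↦ (i : ℕ)) (g := fun i ↦ (σ i : ℕ)),
    Equiv.sum_comp σ (fun i ↦ (i : ℕ)),
    Fin.sum_univ_eq_sum_range (fun i ↦ i) m, Finset.sum_const, Finset.card_univ, Fintype.card_fin,
    smul_eq_mul, mul_add] at hsum
  have hgauss := Finset.sum_range_id_mul_two m
  linarith

noncomputable def alternatingAntidiagonal (F : Type*) {V : Type*} [Ring F] [AddCommGroup V]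
    [Module F V] (v : ℤ → ℤ → V) (k : ℤ) : V :=
  ∑ j ∈ Finset.Icc (1 : ℤ) k, ((-1 : F) ^ (j - 1).toNat) • v j (k + 1 - j)

section Grid

variable {F V : Type*} [Field F] [AddCommGroup V] [Module F V] {m n : ℕ} {v : ℤ → ℤ → V}

theorem map_alternatingAntidiagonal (N : V →ₗ[F] V)
    (hv0 : ∀ i j : ℤ, (i < 1 ∨ (m : ℤ) < i ∨ j < 1 ∨ (n : ℤ) < j) → v i j = 0)
    (hN : ∀ i j : ℤ, 1 ≤ i → i ≤ (m : ℤ) → 1 ≤ j → j ≤ (n : ℤ) →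
      N (v i j) = v (i - 1) j + v i (j - 1))
    {k : ℕ} (hkm : k ≤ m) (hkn : k ≤ n) :
    N (alternatingAntidiagonal F v k) = 0 := by
  set f : ℕ → V := fun j ↦ (-1 : F) ^ j • v j (k - j)
  calc N (alternatingAntidiagonal F v k)
      = ∑ j ∈ Finset.range k, (f j - f (j + 1)) := by
        rw [alternatingAntidiagonal, Int.Icc_eq_finset_map, Finset.sum_map, map_sum]
        refine Finset.sum_congr (by simp) fun j hj ↦ ?_
        simp only [Function.Embedding.trans_apply, Nat.castEmbedding_apply, addLeftEmbedding_apply]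
        rw [Finset.mem_range] at hj
        rw [map_smul, hN _ _ (by omega) (by omega) (by omega) (by omega)]
        simp only [f]
        push_cast
        rw [show (1 + (j : ℤ) - 1).toNat = j by omega, show (1 : ℤ) + j - 1 = j by ring,
          show (k : ℤ) + 1 - (1 + j) = k - j by ring,
          sub_sub, add_comm 1 (j : ℤ),
          pow_succ, mul_neg_one, neg_smul, sub_neg_eq_add, smul_add]
    _ = 0 := by
      rw [Finset.sum_range_sub']
      simp [f, hv0 0 k (by omega), hv0 k 0 (by omega)]

theorem coord_grid_apply (B : Basis (Fin m × Fin n) F V)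
    (hB : ∀ p : Fin m × Fin n, B p = v (((p.1 : ℕ) + 1 : ℕ) : ℤ) (((p.2 : ℕ) + 1 : ℕ) : ℤ))
    (p : Fin m × Fin n) {i j : ℤ} (hi : 1 ≤ i) (him : i ≤ m) (hj : 1 ≤ j) (hjn : j ≤ n) :
    B.coord p (v i j) = if ((p.1 : ℕ) : ℤ) + 1 = i ∧ ((p.2 : ℕ) : ℤ) + 1 = j then 1 else 0 := by
  obtain ⟨a, rfl⟩ : ∃ a : ℕ, i = a + 1 := ⟨(i - 1).toNat, by omega⟩
  obtain ⟨b, rfl⟩ : ∃ b : ℕ, j = b + 1 := ⟨(j - 1).toNat, by omega⟩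
  have hab : v (a + 1) (b + 1) = B (⟨a, by omega⟩, ⟨b, by omega⟩) := by rw [hB]; push_cast; rfl
  rw [hab, Basis.coord_apply, Basis.repr_self, Finsupp.single_apply]
  refine if_congr ?_ rfl rfl
  simp only [Prod.ext_iff, Fin.ext_iff]
  omega

theorem linearIndependent_alternatingAntidiagonal (B : Basis (Fin m × Fin n) F V)
    (hB : ∀ p : Fin m × Fin n, B p = v (((p.1 : ℕ) + 1 : ℕ) : ℤ) (((p.2 : ℕ) + 1 : ℕ) : ℤ))
    (hmn : m ≤ n) :
    LinearIndependent F fun k : Fin m ↦ alternatingAntidiagonal F v (((k : ℕ) + 1 : ℕ) : ℤ) := by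
  have hcoord : ∀ k l : Fin m, B.coord (⟨0, k.pos⟩, Fin.castLE hmn k)
      (alternatingAntidiagonal F v (((l : ℕ) + 1 : ℕ) : ℤ)) = if k = l then 1 else 0 := by
    intro k l
    have := l.isLt
    rw [alternatingAntidiagonal, map_sum, Finset.sum_eq_single_of_mem 1 (by simp)]
    · rw [map_smul, coord_grid_apply B hB _ le_rfl (by omega) (by omega) (by omega)]
      simp [Fin.ext_iff]
    · intro j hj hj1
      rw [Finset.mem_Icc] at hj
      rw [map_smul, coord_grid_apply B hB _ (by omega) (by omega) (by omega) (by omega), if_neg,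
        smul_zero]
      dsimp only
      omega
  refine .of_pairwise_dual_eq_zero_one _ (fun k ↦ B.coord (⟨0, k.pos⟩, Fin.castLE hmn k))
    (fun k l hkl ↦ ?_) (fun k ↦ ?_)
  · exact (hcoord k l).trans (if_neg hkl)
  · exact (hcoord k k).trans (if_pos rfl)

end Grid

theorem stmt_17_general (F : Type*) [Field F] (m n : ℕ) (hmn : m ≤ n)
    (V : Type*) [AddCommGroup V] [Module F V]
    (v : ℤ → ℤ → V)
    (hv_indep : LinearIndependent F
      (fun p : Fin m × Fin n => v (((p.1 : ℕ) + 1 : ℕ) : ℤ) (((p.2 : ℕ) + 1 : ℕ) : ℤ)))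
    (hv_span : Submodule.span F
      (Set.range (fun p : Fin m × Fin n =>
        v (((p.1 : ℕ) + 1 : ℕ) : ℤ) (((p.2 : ℕ) + 1 : ℕ) : ℤ))) = ⊤)
    (hv0 : ∀ i j : ℤ, (i < 1 ∨ (m : ℤ) < i ∨ j < 1 ∨ (n : ℤ) < j) → v i j = 0)
    (N : V →ₗ[F] V)
    (hN : ∀ i j : ℤ, 1 ≤ i → i ≤ (m : ℤ) → 1 ≤ j → j ≤ (n : ℤ) →
      N (v i j) = v (i - 1) j + v i (j - 1))
    (x : ℤ → V)
    (hx : ∀ i : ℤ, x i =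
      ∑ j ∈ Finset.Icc (1 : ℤ) i, ((-1 : F) ^ (j - 1).toNat) • v j (i + 1 - j))
    (σ : Equiv.Perm (Fin m)) (y : Fin m → V)
    (hyx : ∀ i : Fin m,
      (N ^ (m + n - ((i : ℕ) + 1) - ((σ i : ℕ) + 1))) (y i) = x (((σ i : ℕ) + 1 : ℕ) : ℤ))
    (Y : Fin m → Submodule F V)
    (hY : ∀ i : Fin m, Y i = Submodule.span F
      (Set.range fun k : Fin (m + n - ((i : ℕ) + 1) - ((σ i : ℕ) + 1) + 1) =>
        (N ^ (k : ℕ)) (y i))) :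
    (∀ i : Fin m, ∀ z ∈ Y i, N z ∈ Y i) ∧
      (∀ i : Fin m,
        Module.finrank F (Y i) = m + n - ((i : ℕ) + 1) - ((σ i : ℕ) + 1) + 1) ∧
      (∀ i : Fin m, (N ^ (m + n - ((i : ℕ) + 1) - ((σ i : ℕ) + 1) + 1)) (y i) = 0) ∧
      DirectSum.IsInternal Y := by
  obtain rfl : x = alternatingAntidiagonal F v := funext hx
  obtain rfl : Y = _ := funext hY
  set ℓ : Fin m → ℕ := fun i ↦ m + n - ((i : ℕ) + 1) - ((σ i : ℕ) + 1)
  let B := Basis.mk hv_indep hv_span.ge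
  have : FiniteDimensional F V := .of_basis B
  have hnil (i : Fin m) : (N ^ (ℓ i + 1)) (y i) = 0 := by
    have := (σ i).isLt
    rw [pow_succ', Module.End.mul_apply, hyx]
    exact map_alternatingAntidiagonal N hv0 hN (by omega) (by omega)
  have htop : LinearIndependent F fun i ↦ (N ^ ℓ i) (y i) := by
    simp only [ℓ, hyx]
    exact (linearIndependent_alternatingAntidiagonal B (fun p ↦ Basis.mk_apply ..) hmn).comp σ
      σ.injective
  have hchains := Module.End.linearIndependent_sigma_pow_apply N ℓ y hnil htop
  have hspan := hchains.span_eq_top_of_card_eq_finrank' <| by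
    rw [Fintype.card_sigma, finrank_eq_card_basis B]
    simpa using σ.sum_add_sub_sub_add_one n hmn
  have hinternal := DirectSum.isInternal_span_of_linearIndependent_sigma hchains hspan
  refine ⟨fun i z hz ↦ Module.End.apply_mem_span_range_pow_apply (hnil i) hz, fun i ↦ ?_, hnil,
    hinternal⟩
  exact (finrank_span_eq_card (hchains.comp (Sigma.mk i) sigma_mk_injective)).trans
    (Fintype.card_fin _)

/-- Given a permutation σ of {1,…,m} and y_i ∈ D_{m+n−i} with
N^{m+n−i−σ(i)}(y_i) = x_{σ(i)}, each Y_i = span{N^k(y_i) : 0 ≤ k ≤ m+n−i−σ(i)} is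
N-invariant of dimension m+n−i−σ(i)+1, N^{m+n−i−σ(i)+1}(y_i) = 0, and V = Y_1 ⊕ ⋯ ⊕ Y_m. -/
theorem stmt_17 (F : Type*) [Field F] (m n : ℕ) (hm : 0 < m) (hmn : m ≤ n)
    (V : Type*) [AddCommGroup V] [Module F V]
    (v : ℤ → ℤ → V)
    (hv_indep : LinearIndependent F
      (fun p : Fin m × Fin n => v (((p.1 : ℕ) + 1 : ℕ) : ℤ) (((p.2 : ℕ) + 1 : ℕ) : ℤ)))
    (hv_span : Submodule.span F
      (Set.range (fun p : Fin m × Fin n =>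
        v (((p.1 : ℕ) + 1 : ℕ) : ℤ) (((p.2 : ℕ) + 1 : ℕ) : ℤ))) = ⊤)
    (hv0 : ∀ i j : ℤ, (i < 1 ∨ (m : ℤ) < i ∨ j < 1 ∨ (n : ℤ) < j) → v i j = 0)
    (N : V →ₗ[F] V)
    (hN : ∀ i j : ℤ, 1 ≤ i → i ≤ (m : ℤ) → 1 ≤ j → j ≤ (n : ℤ) →
      N (v i j) = v (i - 1) j + v i (j - 1))
    (D : ℤ → Submodule F V)
    (hD : ∀ k : ℤ, D k = Submodule.span F
      {z | ∃ i j : ℤ, 1 ≤ i ∧ i ≤ (m : ℤ) ∧ 1 ≤ j ∧ j ≤ (n : ℤ) ∧ i + j = k + 1 ∧ z = v i j})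
    (x : ℤ → V)
    (hx : ∀ i : ℤ, x i =
      ∑ j ∈ Finset.Icc (1 : ℤ) i, ((-1 : F) ^ (j - 1).toNat) • v j (i + 1 - j))
    (σ : Equiv.Perm (Fin m)) (y : Fin m → V)
    (hy : ∀ i : Fin m, y i ∈ D ((m : ℤ) + n - ((i : ℕ) + 1)))
    (hyx : ∀ i : Fin m,
      (N ^ (m + n - ((i : ℕ) + 1) - ((σ i : ℕ) + 1))) (y i) = x (((σ i : ℕ) + 1 : ℕ) : ℤ))
    (Y : Fin m → Submodule F V)
    (hY : ∀ i : Fin m, Y i = Submodule.span F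
      (Set.range fun k : Fin (m + n - ((i : ℕ) + 1) - ((σ i : ℕ) + 1) + 1) =>
        (N ^ (k : ℕ)) (y i))) :
    (∀ i : Fin m, ∀ z ∈ Y i, N z ∈ Y i) ∧
      (∀ i : Fin m,
        Module.finrank F (Y i) = m + n - ((i : ℕ) + 1) - ((σ i : ℕ) + 1) + 1) ∧
      (∀ i : Fin m, (N ^ (m + n - ((i : ℕ) + 1) - ((σ i : ℕ) + 1) + 1)) (y i) = 0) ∧
      DirectSum.IsInternal Y :=
  stmt_17_general F m n hmn V v hv_indep hv_span hv0 N hN x hx σ y hyx Y hY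
end
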